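/- arXiv:math/0501379 — 9 statements merged into one kernel-verified Lean document; each statement's English description precedes it below -/
import Mathlib

section
/- If a power series f(z) = Σ f_n z^n is holonomic (satisfies a linear ODE with polynomial coefficients and nonzero leading coefficient q_0), then f can be analytically continued along any path avoiding the finite set of zeros of q_0; in particular, a holonomic function analytic at 0 has only finitely many singularities. -/
/-!
Where `q 0` does not vanish, the equation is equivalent to the first-order system `Y' = A(z) Y`
for the jet `Y = (f, f', …, f^(e-1))`, where `A` is the companion matrix, holomorphic off the
zeros of `q 0`. On a disc of radius `r` on which `‖A‖ ≤ M` with `M r < 1`, the Picard operator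
`u ↦ v + ∫_[z₀, z] A u` is a contraction whose iterates are holomorphic, so the system has a
holomorphic solution with any initial value. Solutions are locally unique (Gronwall along
segments), hence unique on connected open sets by the identity theorem. By compactness of the
path one radius `r` works at every point of it, and solving successively on a chain of discs of
radius `r` centred along the path continues `f`.
-/

/-- `F` is an analytic continuation of `f` along the path `γ` (defined on `[0,1]`):
`F t` is analytic at `γ t` for each time `t`, `F 0` agrees with `f` near `γ 0`,
and the family is locally coherent. -/
def ContinuesAlong (f : ℂ → ℂ) (γ : ℝ → ℂ) : Prop :=
  ∃ F : ℝ → ℂ → ℂ,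
    (∀ᶠ z in nhds (γ 0), F 0 z = f z) ∧
    (∀ t ∈ Set.Icc (0 : ℝ) 1, AnalyticAt ℂ (F t) (γ t)) ∧
    (∀ t ∈ Set.Icc (0 : ℝ) 1, ∀ᶠ s in nhds t, ∀ᶠ z in nhds (γ t), F s z = F t z)

open Metric Set Filter Topology BoundedContinuousFunction

noncomputable section

section Retraction

variable {V : Type*} [NormedAddCommGroup V] [NormedSpace ℝ V]

def radialRetraction (x₀ : V) (r : ℝ) (x : V) : V :=
  x₀ + (r / max r ‖x - x₀‖) • (x - x₀)

theorem radialRetraction_mem_closedBall {x₀ : V} {r : ℝ} (hr : 0 ≤ r) (x : V) :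
    radialRetraction x₀ r x ∈ closedBall x₀ r := by
  rw [mem_closedBall, dist_eq_norm, radialRetraction, add_sub_cancel_left, norm_smul,
    Real.norm_eq_abs, abs_div, abs_of_nonneg hr, abs_of_nonneg (hr.trans (le_max_left _ _))]
  rcases hr.eq_or_lt with rfl | hr
  · simp
  · rw [div_mul_eq_mul_div, div_le_iff₀ (hr.trans_le (le_max_left _ _))]
    exact mul_le_mul_of_nonneg_left (le_max_right _ _) hr.le

theorem radialRetraction_of_mem_closedBall {x₀ x : V} {r : ℝ} (hx : x ∈ closedBall x₀ r) :
    radialRetraction x₀ r x = x := by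
  rw [mem_closedBall, dist_eq_norm] at hx
  rcases (norm_nonneg _).trans hx |>.eq_or_lt with rfl | hr
  · simp [radialRetraction, sub_eq_zero.1 (norm_le_zero_iff.1 hx)]
  · simp [radialRetraction, max_eq_left hx, div_self hr.ne']

theorem continuous_radialRetraction {x₀ : V} {r : ℝ} (hr : 0 < r) :
    Continuous (radialRetraction x₀ r) :=
  continuous_const.add <| (continuous_const.div (continuous_const.max (by fun_prop))
    fun _ => (hr.trans_le (le_max_left _ _)).ne').smul (by fun_prop)

end Retraction

variable {E : Type*} [NormedAddCommGroup E] [NormedSpace ℂ E]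

def segmentIntegral (z₀ : ℂ) (h : ℂ → E) (w : ℂ) : E :=
  ∫ t in (0 : ℝ)..1, (w - z₀) • h (z₀ + t • (w - z₀))

theorem segmentIntegral_self (z₀ : ℂ) (h : ℂ → E) : segmentIntegral z₀ h z₀ = 0 := by
  simp [segmentIntegral]

theorem segment_mem_closedBall {z₀ w : ℂ} {r : ℝ} (hw : w ∈ closedBall z₀ r) {t : ℝ}
    (ht : t ∈ Icc (0 : ℝ) 1) : z₀ + t • (w - z₀) ∈ closedBall z₀ r :=
  (convex_closedBall z₀ r).add_smul_sub_mem (mem_closedBall_self (dist_nonneg.trans hw)) hw ht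

theorem continuous_segmentIntegral {h : ℂ → E} (hh : Continuous h) (z₀ : ℂ) :
    Continuous (segmentIntegral z₀ h) :=
  intervalIntegral.continuous_parametric_intervalIntegral_of_continuous' (by fun_prop) 0 1

theorem segmentIntegral_congr {h₁ h₂ : ℂ → E} {z₀ w : ℂ} {r : ℝ}
    (hh : EqOn h₁ h₂ (closedBall z₀ r)) (hw : w ∈ closedBall z₀ r) :
    segmentIntegral z₀ h₁ w = segmentIntegral z₀ h₂ w := by
  refine intervalIntegral.integral_congr fun t ht => ?_
  rw [uIcc_of_le zero_le_one] at ht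
  simp only [hh (segment_mem_closedBall hw ht)]

theorem segmentIntegral_sub {h₁ h₂ : ℂ → E} (hh₁ : Continuous h₁) (hh₂ : Continuous h₂)
    (z₀ w : ℂ) :
    segmentIntegral z₀ (h₁ - h₂) w = segmentIntegral z₀ h₁ w - segmentIntegral z₀ h₂ w := by
  simp only [segmentIntegral, Pi.sub_apply, smul_sub]
  exact intervalIntegral.integral_sub ((by fun_prop : Continuous _).intervalIntegrable 0 1)
    ((by fun_prop : Continuous _).intervalIntegrable 0 1)

theorem norm_segmentIntegral_le {h : ℂ → E} {z₀ w : ℂ} {r C : ℝ} (hw : w ∈ closedBall z₀ r)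
    (hC : ∀ z ∈ closedBall z₀ r, ‖h z‖ ≤ C) : ‖segmentIntegral z₀ h w‖ ≤ r * C := by
  have hwr : ‖w - z₀‖ ≤ r := by rwa [← dist_eq_norm, ← mem_closedBall]
  have := intervalIntegral.norm_integral_le_of_norm_le_const (C := r * C) (a := 0) (b := 1)
    (f := fun t : ℝ => (w - z₀) • h (z₀ + t • (w - z₀))) fun t ht => by
    rw [uIoc_of_le zero_le_one] at ht
    rw [norm_smul]
    exact mul_le_mul hwr (hC _ (segment_mem_closedBall hw (Ioc_subset_Icc_self ht)))
      (norm_nonneg _) ((norm_nonneg _).trans hwr)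
  simpa [segmentIntegral] using this

variable {A : ℂ → E →L[ℂ] E}

def IsSolutionOn (A : ℂ → E →L[ℂ] E) (Y : ℂ → E) (s : Set ℂ) : Prop :=
  ∀ z ∈ s, HasDerivAt Y (A z (Y z)) z

theorem IsSolutionOn.mono {Y : ℂ → E} {s t : Set ℂ} (hY : IsSolutionOn A Y s) (hts : t ⊆ s) :
    IsSolutionOn A Y t :=
  fun z hz => hY z (hts hz)

theorem IsSolutionOn.differentiableOn {Y : ℂ → E} {s : Set ℂ} (hY : IsSolutionOn A Y s) :
    DifferentiableOn ℂ Y s :=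
  fun z hz => (hY z hz).differentiableAt.differentiableWithinAt

theorem exists_contractingWith_picard {z₀ : ℂ} {r M : ℝ} (hr : 0 < r)
    (hA : ContinuousOn A (closedBall z₀ r)) (hM : ∀ z ∈ closedBall z₀ r, ‖A z‖ ≤ M)
    (hMr : M * r < 1) (v : E) :
    ∃ T : (ℂ →ᵇ E) → ℂ →ᵇ E, ContractingWith (M * r).toNNReal T ∧
      ∀ u : ℂ →ᵇ E, ∀ w ∈ closedBall z₀ r,
        T u w = v + segmentIntegral z₀ (fun z => A z (u z)) w := by
  have hM₀ : 0 ≤ M := (norm_nonneg _).trans (hM z₀ (mem_closedBall_self hr.le))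
  set ρ := radialRetraction z₀ r
  have hρ : ∀ z, ρ z ∈ closedBall z₀ r := radialRetraction_mem_closedBall hr.le
  have hρ_eq : ∀ z ∈ closedBall z₀ r, ρ z = z := fun _ => radialRetraction_of_mem_closedBall
  -- composing with `ρ` makes the integrand a bounded continuous function on all of `ℂ`
  set g : (ℂ →ᵇ E) → ℂ → E := fun u z => A (ρ z) (u (ρ z))
  have hg_cont (u : ℂ →ᵇ E) : Continuous (g u) :=
    (hA.comp_continuous (continuous_radialRetraction hr) hρ).clm_apply
      (u.continuous.comp (continuous_radialRetraction hr))
  have hg_le (u : ℂ →ᵇ E) (z : ℂ) : ‖g u z‖ ≤ M * ‖u‖ :=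
    (A (ρ z)).le_opNorm _ |>.trans <|
      mul_le_mul (hM _ (hρ z)) (u.norm_coe_le_norm _) (norm_nonneg _) hM₀
  have hg_sub (u u' : ℂ →ᵇ E) : g u - g u' = g (u - u') := by
    ext z; simp [g]
  have hseg_le (u : ℂ →ᵇ E) (w : ℂ) : ‖segmentIntegral z₀ (g u) (ρ w)‖ ≤ r * (M * ‖u‖) :=
    norm_segmentIntegral_le (hρ w) fun z _ => hg_le u z
  let T (u : ℂ →ᵇ E) : ℂ →ᵇ E :=
    .ofNormedAddCommGroup (fun w => v + segmentIntegral z₀ (g u) (ρ w))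
      (continuous_const.add <|
        (continuous_segmentIntegral (hg_cont u) z₀).comp (continuous_radialRetraction hr))
      (‖v‖ + r * (M * ‖u‖)) fun w => (norm_add_le _ _).trans (add_le_add_right (hseg_le u w) _)
  refine ⟨T, ⟨Real.toNNReal_lt_one.2 hMr, LipschitzWith.of_dist_le_mul fun u u' => ?_⟩, ?_⟩
  · refine (BoundedContinuousFunction.dist_le (by positivity)).2 fun w => ?_
    calc dist (T u w) (T u' w) = ‖segmentIntegral z₀ (g (u - u')) (ρ w)‖ := by
          simp [T, dist_eq_norm, ← hg_sub, segmentIntegral_sub (hg_cont u) (hg_cont u')]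
      _ ≤ r * (M * ‖u - u'‖) := hseg_le _ _
      _ = (M * r).toNNReal * dist u u' := by
          rw [Real.coe_toNNReal _ (by positivity), dist_eq_norm]; ring
  · intro u w hw
    change v + segmentIntegral z₀ (g u) (ρ w) = _
    rw [hρ_eq w hw]
    congr 1
    exact segmentIntegral_congr (fun z hz => by simp only [g, hρ_eq z hz]) hw

theorem eventuallyEq_of_isSolution {Y Z : ℂ → E} {z₀ : ℂ} (hA : ContinuousAt A z₀)
    (hY : ∀ᶠ z in 𝓝 z₀, HasDerivAt Y (A z (Y z)) z)
    (hZ : ∀ᶠ z in 𝓝 z₀, HasDerivAt Z (A z (Z z)) z) (h : Y z₀ = Z z₀) : Y =ᶠ[𝓝 z₀] Z := by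
  set M := ‖A z₀‖ + 1
  obtain ⟨ε, hε, hball⟩ := eventually_nhds_iff_ball.1
    ((hA.norm.eventually (gt_mem_nhds (lt_add_one ‖A z₀‖))).and (hY.and hZ))
  filter_upwards [ball_mem_nhds z₀ hε] with z hz
  -- restrict both solutions to the segment from `z₀` to `z` and apply real ODE uniqueness
  set σ : ℝ → ℂ := fun t => z₀ + t • (z - z₀)
  have hσ : ∀ t ∈ Icc (0 : ℝ) 1, σ t ∈ ball z₀ ε :=
    fun t ht => (convex_ball z₀ ε).add_smul_sub_mem (mem_ball_self hε) hz ht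
  have hσ' (t : ℝ) : HasDerivAt σ (z - z₀) t := by
    simpa [σ] using ((hasDerivAt_id t).smul_const (z - z₀)).const_add z₀
  have hcomp {W : ℂ → E} (hW : ∀ w ∈ ball z₀ ε, HasDerivAt W (A w (W w)) w) (t : ℝ)
      (ht : t ∈ Icc (0 : ℝ) 1) : HasDerivAt (W ∘ σ) ((z - z₀) • A (σ t) ((W ∘ σ) t)) t :=
    (hW _ (hσ t ht)).scomp t (hσ' t)
  have hlip (t : ℝ) (ht : t ∈ Ico (0 : ℝ) 1) :
      LipschitzOnWith (‖z - z₀‖ * M).toNNReal (fun x => (z - z₀) • A (σ t) x) univ := by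
    refine (lipschitzWith_iff_norm_sub_le.2 fun x y => ?_).lipschitzOnWith
    rw [← smul_sub, ← map_sub, norm_smul, Real.coe_toNNReal _ (by positivity), mul_assoc]
    exact mul_le_mul_of_nonneg_left ((A _).le_opNorm _ |>.trans <| mul_le_mul_of_nonneg_right
      (hball _ (hσ t (Ico_subset_Icc_self ht))).1.le (norm_nonneg _)) (norm_nonneg _)
  have hY' := fun w hw => (hball w hw).2.1
  have hZ' := fun w hw => (hball w hw).2.2
  have heq := ODE_solution_unique_of_mem_Icc_right hlip
    (HasDerivAt.continuousOn fun t ht => hcomp hY' t ht)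
    (fun t ht => (hcomp hY' t (Ico_subset_Icc_self ht)).hasDerivWithinAt) (fun _ _ => trivial)
    (HasDerivAt.continuousOn fun t ht => hcomp hZ' t ht)
    (fun t ht => (hcomp hZ' t (Ico_subset_Icc_self ht)).hasDerivWithinAt) (fun _ _ => trivial)
    (by simpa [σ] using h) (right_mem_Icc.2 zero_le_one)
  simpa [σ] using heq

variable [CompleteSpace E]

theorem hasDerivAt_segmentIntegral {h : ℂ → E} {z₀ z : ℂ} {r : ℝ}
    (hh : DifferentiableOn ℂ h (ball z₀ r)) (hz : z ∈ ball z₀ r) :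
    HasDerivAt (segmentIntegral z₀ h) (h z) z := by
  obtain ⟨G, hG⟩ := hh.isExactOn_ball
  have hseg : ∀ w ∈ ball z₀ r, ∀ t ∈ Icc (0 : ℝ) 1, z₀ + t • (w - z₀) ∈ ball z₀ r :=
    fun w hw t ht => (convex_ball z₀ r).add_smul_sub_mem (mem_ball_self (pos_of_mem_ball hz)) hw ht
  -- `G` is a primitive of `h` on the disc (Morera), so the segment integral is `G w - G z₀`
  have hprim : ∀ w ∈ ball z₀ r, segmentIntegral z₀ h w = G w - G z₀ := by
    intro w hw
    have hpath : ∀ t : ℝ, HasDerivAt (fun t : ℝ => z₀ + t • (w - z₀)) (w - z₀) t := fun t => by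
      simpa using ((hasDerivAt_id t).smul_const (w - z₀)).const_add z₀
    have := intervalIntegral.integral_eq_sub_of_hasDerivAt
      (f := fun t : ℝ => G (z₀ + t • (w - z₀))) (a := 0) (b := 1)
      (fun t ht => (hG _ (hseg w hw t (uIcc_of_le (zero_le_one' ℝ) ▸ ht))).scomp t (hpath t))
      (ContinuousOn.intervalIntegrable <| (hh.continuousOn.comp (by fun_prop)
        fun t ht => hseg w hw t (uIcc_of_le (zero_le_one' ℝ) ▸ ht)).const_smul (w - z₀))
    simpa [segmentIntegral] using this
  exact ((hG z hz).sub_const (G z₀)).congr_of_eventuallyEq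
    (eventually_of_mem (isOpen_ball.mem_nhds hz) hprim)

theorem exists_isSolutionOn_ball {z₀ : ℂ} {r M : ℝ} (hr : 0 < r)
    (hA : DifferentiableOn ℂ A (closedBall z₀ r)) (hM : ∀ z ∈ closedBall z₀ r, ‖A z‖ ≤ M)
    (hMr : M * r < 1) (v : E) : ∃ Y : ℂ → E, IsSolutionOn A Y (ball z₀ r) ∧ Y z₀ = v := by
  obtain ⟨T, hT, hTeq⟩ := exists_contractingWith_picard hr hA.continuousOn hM hMr v
  have hT_deriv (u : ℂ →ᵇ E) (hu : DifferentiableOn ℂ u (ball z₀ r)) :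
      ∀ z ∈ ball z₀ r, HasDerivAt (T u) (A z (u z)) z := fun z hz =>
    ((hasDerivAt_segmentIntegral ((hA.mono ball_subset_closedBall).clm_apply hu) hz).const_add v
      ).congr_of_eventuallyEq <| eventually_of_mem (isOpen_ball.mem_nhds hz) fun w hw =>
        hTeq u w (ball_subset_closedBall hw)
  have hiter (n : ℕ) : DifferentiableOn ℂ (T^[n] 0) (ball z₀ r) := by
    induction n with
    | zero => exact differentiableOn_const 0
    | succ n ih =>
      rw [Function.iterate_succ_apply']
      exact fun z hz => (hT_deriv _ ih z hz).differentiableAt.differentiableWithinAt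
  set Y := ContractingWith.fixedPoint T hT
  -- the Picard iterates are holomorphic, hence so is their uniform limit
  have hY : DifferentiableOn ℂ Y (ball z₀ r) :=
    (tendsto_iff_tendstoUniformly.1 (hT.tendsto_iterate_fixedPoint 0)
      |>.tendstoUniformlyOn (s := ball z₀ r)).tendstoLocallyUniformlyOn.differentiableOn
      (.of_forall hiter) isOpen_ball
  have hTY : T Y = Y := hT.fixedPoint_isFixedPt
  refine ⟨Y, fun z hz => ?_, ?_⟩
  · simpa only [hTY] using hT_deriv Y hY z hz
  · rw [← hTY, hTeq Y z₀ (mem_closedBall_self hr.le), segmentIntegral_self, add_zero]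

theorem IsSolutionOn.eqOn {Y Z : ℂ → E} {s : Set ℂ} {z₀ : ℂ} (hs : IsOpen s)
    (hs' : IsPreconnected s) (hA : ContinuousOn A s) (hY : IsSolutionOn A Y s)
    (hZ : IsSolutionOn A Z s) (hz₀ : z₀ ∈ s) (h : Y z₀ = Z z₀) : EqOn Y Z s :=
  (hY.differentiableOn.analyticOnNhd hs).eqOn_of_preconnected_of_eventuallyEq
    (hZ.differentiableOn.analyticOnNhd hs) hs' hz₀ <|
    eventuallyEq_of_isSolution (hA.continuousAt (hs.mem_nhds hz₀))
      (eventually_of_mem (hs.mem_nhds hz₀) hY) (eventually_of_mem (hs.mem_nhds hz₀) hZ) h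

theorem exists_pos_forall_exists_isSolutionOn_ball {U K : Set ℂ} (hU : IsOpen U)
    (hA : DifferentiableOn ℂ A U) (hK : IsCompact K) (hKU : K ⊆ U) :
    ∃ r > 0, ∀ p ∈ K, ball p r ⊆ U ∧ ∀ v : E, ∃ Y, IsSolutionOn A Y (ball p r) ∧ Y p = v := by
  obtain ⟨δ, hδ, hδU⟩ := hK.exists_cthickening_subset_open hU hKU
  obtain ⟨M, hM⟩ := hK.cthickening.exists_bound_of_continuousOn (hA.continuousOn.mono hδU)
  set M' := max M 0
  set r := min δ (1 / (M' + 1))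
  have hr : 0 < r := lt_min hδ (by positivity)
  have hM'r : M' * r < 1 := calc
    M' * r ≤ M' * (1 / (M' + 1)) := mul_le_mul_of_nonneg_left (min_le_right _ _) (le_max_right _ _)
    _ < 1 := by rw [mul_one_div, div_lt_one (by positivity)]; linarith
  refine ⟨r, hr, fun p hp => ?_⟩
  have hsub : closedBall p r ⊆ cthickening δ K :=
    (closedBall_subset_closedBall (min_le_left _ _)).trans (closedBall_subset_cthickening hp δ)
  exact ⟨ball_subset_closedBall.trans (hsub.trans hδU), fun v => exists_isSolutionOn_ball hr
    (hA.mono (hsub.trans hδU)) (fun z hz => (hM z (hsub hz)).trans (le_max_left _ _)) hM'r v⟩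

theorem exists_isSolutionOn_chain {U : Set ℂ} (hA : ContinuousOn A U) {c : ℕ → ℂ} {r : ℝ}
    (hU : ∀ i, ball (c i) r ⊆ U)
    (hsol : ∀ i (v : E), ∃ Y, IsSolutionOn A Y (ball (c i) r) ∧ Y (c i) = v)
    (hc : ∀ i, dist (c (i + 1)) (c i) < r) (v₀ : E) :
    ∃ Y : ℕ → ℂ → E, (∀ i, IsSolutionOn A (Y i) (ball (c i) r)) ∧ Y 0 (c 0) = v₀ ∧
      ∀ i, EqOn (Y i) (Y (i + 1)) (ball (c i) r ∩ ball (c (i + 1)) r) := by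
  choose S hS hSc using hsol
  -- the initial value on the `(i + 1)`-st disc is the value of the `i`-th solution at its centre
  let v (i : ℕ) : E := Nat.rec v₀ (fun i vi => S i vi (c (i + 1))) i
  refine ⟨fun i => S i (v i), fun i => hS i _, hSc 0 _, fun i => ?_⟩
  have hr : 0 < r := dist_nonneg.trans_lt (hc i)
  exact IsSolutionOn.eqOn (isOpen_ball.inter isOpen_ball)
    ((convex_ball _ _).inter (convex_ball _ _)).isPreconnected
    (hA.mono (inter_subset_left.trans (hU i))) ((hS i _).mono inter_subset_left)
    ((hS (i + 1) _).mono inter_subset_right) ⟨hc i, mem_ball_self hr⟩ (hSc (i + 1) _).symm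

theorem natFloor_le_natFloor_add_one {x y : ℝ} (h : dist x y < 1) : ⌊x⌋₊ ≤ ⌊y⌋₊ + 1 := by
  rw [Real.dist_eq, abs_sub_lt_iff] at h
  rcases le_or_gt 0 y with hy | hy
  · exact (Nat.floor_le_floor (by linarith)).trans (Nat.floor_add_one hy).le
  · simp [Nat.floor_eq_zero.2 (by linarith : x < 1)]

theorem dist_natFloor_div_lt {N s t : ℝ} (hN : 0 < N) (ht : 0 ≤ t)
    (h : dist (s * N) (t * N) < 1) : dist t (⌊s * N⌋₊ / N) < 2 / N := by
  have key : |t * N - ⌊s * N⌋₊| < 2 := by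
    rw [Real.dist_eq, abs_sub_lt_iff] at h
    rw [abs_sub_lt_iff]
    rcases le_or_gt 0 (s * N) with hs | hs
    · constructor <;> linarith [Nat.floor_le hs, Nat.lt_floor_add_one (s * N)]
    · rw [Nat.floor_eq_zero.2 (by linarith)]
      have : 0 ≤ t * N := mul_nonneg ht hN.le
      constructor <;> push_cast <;> linarith
  rw [Real.dist_eq, lt_div_iff₀ hN, ← abs_of_pos hN, ← abs_mul, abs_of_pos hN, sub_mul,
    div_mul_cancel₀ _ hN.ne']
  exact key

theorem continuesAlong_of_isSolution {U : Set ℂ} (hU : IsOpen U) (hA : DifferentiableOn ℂ A U)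
    {γ : ℝ → ℂ} (hγ : ContinuousOn γ (Icc 0 1)) (hγU : ∀ t ∈ Icc (0 : ℝ) 1, γ t ∈ U)
    {Y₀ : ℂ → E} (hY₀ : ∀ᶠ z in 𝓝 (γ 0), HasDerivAt Y₀ (A z (Y₀ z)) z)
    (L : E →L[ℂ] ℂ) {f : ℂ → ℂ} (hf : ∀ᶠ z in 𝓝 (γ 0), L (Y₀ z) = f z) :
    ContinuesAlong f γ := by
  have hγc : Continuous ((Icc (0 : ℝ) 1).domRestrict γ) :=
    continuousOn_iff_continuous_domRestrict.1 hγ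
  set γ' := IccExtend zero_le_one ((Icc (0 : ℝ) 1).domRestrict γ)
  have hγ' : ∀ t ∈ Icc (0 : ℝ) 1, γ' t = γ t := fun t ht => IccExtend_of_mem _ _ ht
  have hKU : range γ' ⊆ U := by
    rw [IccExtend_range]; rintro _ ⟨t, rfl⟩; exact hγU t t.2
  obtain ⟨r, hr, hball⟩ := exists_pos_forall_exists_isSolutionOn_ball hU hA
    (by rw [IccExtend_range]; exact isCompact_range hγc) hKU
  obtain ⟨δ, hδ, hγδ⟩ := Metric.uniformContinuous_iff.1
    ((CompactSpace.uniformContinuous_of_continuous hγc).comp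
      (LipschitzWith.projIcc zero_le_one).uniformContinuous) r hr
  -- chain of discs centred at the grid points `γ' (i / N)`, with mesh `1 / N < δ / 2`
  obtain ⟨N, hN⟩ := exists_gt (2 / δ)
  have hN₀ : 0 < N := (by positivity : 0 < 2 / δ).trans hN
  have hNδ : 2 / N < δ := by rwa [div_lt_iff₀ hN₀, mul_comm, ← div_lt_iff₀ hδ]
  set c : ℕ → ℂ := fun i => γ' (i / N)
  obtain ⟨Y, hY, hY0, hYY⟩ := exists_isSolutionOn_chain hA.continuousOn
    (fun i => (hball (c i) (mem_range_self _)).1) (fun i => (hball (c i) (mem_range_self _)).2)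
    (fun i => hγδ <| by
      rw [Real.dist_eq, Nat.cast_succ, add_div, add_sub_cancel_left, abs_of_pos (by positivity)]
      linarith [div_lt_div_of_pos_right one_lt_two hN₀])
    (Y₀ (γ 0))
  have hnear : ∀ t ∈ Icc (0 : ℝ) 1, ∀ s, dist (s * N) (t * N) < 1 →
      γ t ∈ ball (c ⌊s * N⌋₊) r := fun t ht s hs =>
    hγ' t ht ▸ hγδ ((dist_natFloor_div_lt hN₀ ht.1 hs).trans hNδ)
  have hglue : ∀ i k, i ≤ k + 1 → k ≤ i + 1 →
      EqOn (Y i) (Y k) (ball (c i) r ∩ ball (c k) r) := by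
    intro i k hik hki
    obtain rfl | rfl | rfl : i = k ∨ i = k + 1 ∨ k = i + 1 := by omega
    · exact fun _ _ => rfl
    · exact fun z hz => (hYY k ⟨hz.2, hz.1⟩).symm
    · exact hYY i
  refine ⟨fun s z => L (Y ⌊s * N⌋₊ z), ?_, fun t ht => ?_, fun t ht => ?_⟩
  · have hc₀ : c 0 = γ 0 := by simpa [c] using hγ' 0 (left_mem_Icc.2 zero_le_one)
    have hY₀' : Y 0 =ᶠ[𝓝 (γ 0)] Y₀ := eventuallyEq_of_isSolution
      (hA.continuousOn.continuousAt (hU.mem_nhds (hγU 0 (left_mem_Icc.2 zero_le_one))))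
      (eventually_of_mem (isOpen_ball.mem_nhds (hc₀ ▸ mem_ball_self hr)) (hc₀ ▸ hY 0)) hY₀
      (hc₀ ▸ hY0)
    filter_upwards [hY₀', hf] with z h₁ h₂
    simp [h₁, h₂]
  · exact L.analyticAt _ |>.comp <| (hY _).differentiableOn.analyticOnNhd isOpen_ball _
      (hnear t ht t (by simp))
  · filter_upwards [((continuous_mul_const N).tendsto t).eventually
      (ball_mem_nhds (t * N) one_pos)] with s hs
    filter_upwards [(isOpen_ball.inter isOpen_ball).mem_nhds
      ⟨hnear t ht s hs, hnear t ht t (by simp)⟩] with z hz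
    rw [hglue _ _ (natFloor_le_natFloor_add_one hs)
      (natFloor_le_natFloor_add_one (dist_comm (s * N) _ ▸ hs)) hz]

-- a constant map plus a combination of constant maps, so that holomorphy in `z` is immediate
def companion {n : ℕ} (a : Fin n → ℂ → ℂ) (z : ℂ) : (Fin n → ℂ) →L[ℂ] Fin n → ℂ :=
  (.pi fun i => if h : (i : ℕ) + 1 < n then .proj ⟨i + 1, h⟩ else 0) +
    ∑ j, a j z • .pi fun i => if (i : ℕ) + 1 < n then 0 else .proj j

theorem companion_apply {n : ℕ} (a : Fin n → ℂ → ℂ) (z : ℂ) (w : Fin n → ℂ) (i : Fin n) :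
    companion a z w i = if h : (i : ℕ) + 1 < n then w ⟨i + 1, h⟩ else ∑ j, a j z * w j := by
  by_cases h : (i : ℕ) + 1 < n <;> simp [companion, h]

theorem differentiableOn_companion {n : ℕ} {a : Fin n → ℂ → ℂ} {s : Set ℂ}
    (ha : ∀ j, DifferentiableOn ℂ (a j) s) : DifferentiableOn ℂ (companion a) s :=
  (differentiableOn_const _).add <| .fun_sum fun j _ => (ha j).smul_const _

def jet (n : ℕ) (f : ℂ → ℂ) (z : ℂ) : Fin n → ℂ := fun i => iteratedDeriv i f z

theorem hasDerivAt_jet {n : ℕ} {a : Fin n → ℂ → ℂ} {f : ℂ → ℂ} {z : ℂ} (hf : AnalyticAt ℂ f z)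
    (h : iteratedDeriv n f z = ∑ j, a j z * iteratedDeriv j f z) :
    HasDerivAt (jet n f) (companion a z (jet n f z)) z := by
  refine hasDerivAt_pi.2 fun i => ?_
  have hi : HasDerivAt (iteratedDeriv i f) (iteratedDeriv (i + 1) f z) z := by
    rw [iteratedDeriv_succ, iteratedDeriv_eq_iterate]
    exact (hf.iterated_deriv i).differentiableAt.hasDerivAt
  rw [companion_apply]
  split_ifs with hin
  · exact hi
  · rwa [show (i : ℕ) + 1 = n by omega, h] at hi

theorem eq_sum_of_sum_range_mul_eq_zero {c x : ℕ → ℂ} {e : ℕ} (hc : c 0 ≠ 0)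
    (h : ∑ k ∈ Finset.range (e + 1), c k * x (e - k) = 0) :
    x e = ∑ j : Fin e, -(c (e - j) / c 0) * x j := by
  rw [Finset.sum_range_succ', ← Finset.sum_range_reflect, Nat.sub_zero] at h
  have hS : ∑ j ∈ Finset.range e, c (e - 1 - j + 1) * x (e - (e - 1 - j + 1)) =
      ∑ j ∈ Finset.range e, c (e - j) * x j := Finset.sum_congr rfl fun j hj => by
    rw [Finset.mem_range] at hj
    rw [show e - 1 - j + 1 = e - j by omega, show e - (e - j) = j by omega]
  rw [hS] at h
  rw [Fin.sum_univ_eq_sum_range (fun j => -(c (e - j) / c 0) * x j)]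
  simp only [neg_mul, Finset.sum_neg_distrib, div_mul_eq_mul_div, ← Finset.sum_div, ← neg_div]
  rw [eq_div_iff hc]
  linear_combination h

end

/-- A holonomic function analytic at `0` can be continued analytically along any
path avoiding the (finite) zero set of the leading coefficient `q 0`; in
particular it has only finitely many singularities. -/
theorem holonomic_continuation (f : ℂ → ℂ) (hf : AnalyticAt ℂ f 0)
    (e : ℕ) (q : ℕ → Polynomial ℂ) (hq : q 0 ≠ 0)
    (hode : ∀ᶠ z in nhds (0 : ℂ),
      ∑ k ∈ Finset.range (e + 1), (q k).eval z * iteratedDeriv (e - k) f z = 0) :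
    {z : ℂ | (q 0).eval z = 0}.Finite ∧
    ∀ γ : ℝ → ℂ, ContinuousOn γ (Set.Icc 0 1) → γ 0 = 0 →
      (∀ t ∈ Set.Icc (0 : ℝ) 1, (q 0).eval (γ t) ≠ 0) →
      ContinuesAlong f γ := by
  refine ⟨Polynomial.finite_setOfPred_isRoot hq, fun γ hγ hγ0 hγq => ?_⟩
  set a : Fin e → ℂ → ℂ := fun j z => -((q (e - j)).eval z / (q 0).eval z)
  have hnormal : ∀ᶠ z in 𝓝 (γ 0),
      AnalyticAt ℂ f z ∧ iteratedDeriv e f z = ∑ j, a j z * iteratedDeriv j f z := by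
    have hq₀ := hγq 0 (left_mem_Icc.2 zero_le_one)
    rw [hγ0] at hq₀ ⊢
    filter_upwards [hf.eventually_analyticAt, hode,
      (q 0).continuous.continuousAt.eventually_ne hq₀] with z hfz hz hq₀z
    exact ⟨hfz, eq_sum_of_sum_range_mul_eq_zero (c := fun k => (q k).eval z)
      (x := fun k => iteratedDeriv k f z) hq₀z hz⟩
  rcases e with _ | e
  -- for `e = 0` the equation reads `q 0 * f = 0`
  · refine ⟨fun _ _ => 0, hnormal.mono fun z hz => ?_, fun _ _ => analyticAt_const,
      fun _ _ => .of_forall fun _ => .of_forall fun _ => rfl⟩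
    simpa using hz.2.symm
  · exact continuesAlong_of_isSolution (isOpen_ne_fun (q 0).continuous continuous_const)
      (differentiableOn_companion fun j => ((q _).differentiableOn.div (q 0).differentiableOn
        fun _ hz => hz).neg) hγ hγq (hnormal.mono fun z hz => hasDerivAt_jet hz.1 hz.2)
      (.proj 0) (.of_forall fun z => by simp [jet])
end

section
/- If (f_n) is a holonomic sequence, then the sequence of alternating binomial differences f̂_n = Σ_{k=0}^n C(n,k) (-1)^k f_k is also holonomic. -/
open Finset

/-- A sequence is holonomic (P-recursive) if it satisfies a linear recurrence
with polynomial coefficients whose leading coefficient is not identically zero. -/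
def HolonomicSeq (f : ℕ → ℂ) : Prop :=
  ∃ (d : ℕ) (p : ℕ → Polynomial ℂ), p 0 ≠ 0 ∧
    ∀ n : ℕ, ∑ j ∈ Finset.range (d + 1), (p j).eval (n : ℂ) * f (n + (d - j)) = 0

open Polynomial

noncomputable section
namespace BinDiffProof

set_option linter.unnecessarySeqFocus false

def B (h : ℕ → ℂ) (n : ℕ) : ℂ := ∑ k ∈ Finset.range (n + 1), (n.choose k : ℂ) * (-1) ^ k * h k

lemma B_succ (h : ℕ → ℂ) (n : ℕ) :
    B h (n + 1) = B h n - B (fun k => h (k + 1)) n := by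
  unfold B
  rw [Finset.sum_range_succ' (fun k => (((n+1).choose k : ℂ)) * (-1) ^ k * h k) (n+1)]
  have key : ∀ k, (((n+1).choose (k+1) : ℂ)) * (-1) ^ (k+1) * h (k+1)
      = ((n.choose (k+1) : ℂ) * (-1) ^ (k+1) * h (k+1))
        - (n.choose k : ℂ) * (-1) ^ k * h (k+1) := by
    intro k
    rw [Nat.choose_succ_succ]
    push_cast
    ring
  rw [Finset.sum_congr rfl (fun k _ => key k)]
  rw [Finset.sum_sub_distrib]
  have e1 : (∑ k ∈ Finset.range (n+1), (n.choose (k+1) : ℂ) * (-1) ^ (k+1) * h (k+1))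
      + ((n+1).choose 0 : ℂ) * (-1) ^ 0 * h 0
      = ∑ k ∈ Finset.range (n+2), (n.choose k : ℂ) * (-1) ^ k * h k := by
    rw [Finset.sum_range_succ' (fun k => ((n.choose k : ℂ)) * (-1) ^ k * h k) (n+1)]
    simp
  have e2 : ∑ k ∈ Finset.range (n+2), (n.choose k : ℂ) * (-1) ^ k * h k
      = ∑ k ∈ Finset.range (n+1), (n.choose k : ℂ) * (-1) ^ k * h k := by
    rw [Finset.sum_range_succ]
    simp [Nat.choose_succ_self]
  calc _ = ((∑ k ∈ Finset.range (n+1), (n.choose (k+1) : ℂ) * (-1) ^ (k+1) * h (k+1))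
            + ((n+1).choose 0 : ℂ) * (-1) ^ 0 * h 0)
          - ∑ k ∈ Finset.range (n+1), (n.choose k : ℂ) * (-1) ^ k * h (k+1) := by ring
    _ = _ := by rw [e1, e2]

lemma B_N (h : ℕ → ℂ) (n : ℕ) :
    B (fun k => (k : ℂ) * h k) (n + 1) = ((n : ℂ) + 1) * (B h (n + 1) - B h n) := by
  have l1 : B (fun k => (k : ℂ) * h k) (n+1)
      = - (((n : ℂ) + 1) * B (fun k => h (k + 1)) n) := by
    unfold B
    rw [Finset.sum_range_succ' (fun k => (((n+1).choose k : ℂ)) * (-1) ^ k * ((k : ℂ) * h k)) (n+1)]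
    have key : ∀ k : ℕ, (((n+1).choose (k+1) : ℂ)) * (-1) ^ (k+1) * (((k+1 : ℕ) : ℂ) * h (k+1))
        = -((n.choose k : ℂ) * (-1) ^ k * (((n:ℂ)+1) * h (k+1))) := by
      intro k
      have hc : ((n+1 : ℕ) : ℂ) * (n.choose k : ℂ) = ((n+1).choose (k+1) : ℂ) * ((k+1 : ℕ) : ℂ) := by
        rw [← Nat.cast_mul, ← Nat.cast_mul, Nat.add_one_mul_choose_eq]
      push_cast at hc ⊢
      linear_combination (-1:ℂ)^k * h (k+1) * hc
    rw [Finset.sum_congr rfl (fun k _ => key k)]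
    rw [Finset.mul_sum]
    simp [Finset.sum_neg_distrib]
    congr 1
    ext k
    ring
  rw [l1, B_succ]
  ring

/-- `B h (· + D)` is a polynomial-coefficient combination of `g (· + t)`, `t ≤ T`. -/
def Rep (g h : ℕ → ℂ) (D T : ℕ) (q : ℕ → Polynomial ℂ) : Prop :=
  (∀ t, T < t → q t = 0) ∧
    ∀ n : ℕ, B h (n + D) = ∑ t ∈ Finset.range (T + 1), (q t).eval (n : ℂ) * g (n + t)

lemma eval_comp_X_add_one (p : Polynomial ℂ) (n : ℕ) :
    (p.comp (X + C 1)).eval (n : ℂ) = p.eval ((n : ℂ) + 1) := by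
  rw [eval_comp]; simp

lemma Rep_zero (f : ℕ → ℂ) : Rep (B f) f 0 0 (fun t => if t = 0 then 1 else 0) := by
  constructor
  · intro t ht
    have : t ≠ 0 := by omega
    simp [this]
  · intro n; simp

lemma Rep_raise {g h : ℕ → ℂ} {D T : ℕ} {q : ℕ → Polynomial ℂ} (hq : Rep g h D T q) :
    Rep g h (D + 1) (T + 1) (fun t => if t = 0 then 0 else (q (t - 1)).comp (X + C 1)) := by
  obtain ⟨hz, hrep⟩ := hq
  constructor
  · intro t ht
    have ht0 : t ≠ 0 := by omega
    simp only [if_neg ht0]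
    rw [hz (t - 1) (by omega), zero_comp]
  · intro n
    have : n + (D + 1) = (n + 1) + D := by omega
    rw [this, hrep (n + 1)]
    rw [Finset.sum_range_succ' (fun t => ((if t = 0 then 0 else (q (t - 1)).comp (X + C 1)).eval (n:ℂ)) * g (n + t)) (T + 1)]
    have h0 : (if (0:ℕ) = 0 then (0:Polynomial ℂ) else (q (0 - 1)).comp (X + C 1)) = 0 := if_pos rfl
    rw [h0, eval_zero, zero_mul, add_zero]
    refine Finset.sum_congr rfl (fun t _ => ?_)
    rw [if_neg (Nat.succ_ne_zero t)]
    simp only [Nat.add_sub_cancel]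
    rw [eval_comp_X_add_one]
    have e2 : n + (t + 1) = (n + 1) + t := by omega
    rw [e2]
    push_cast
    ring_nf

lemma Rep_S {g h : ℕ → ℂ} {D T : ℕ} {q : ℕ → Polynomial ℂ} (hq : Rep g h D T q) :
    Rep g (fun k => h (k + 1)) D (T + 1)
      (fun t => q t - if t = 0 then 0 else (q (t - 1)).comp (X + C 1)) := by
  obtain ⟨hz, hrep⟩ := hq
  constructor
  · intro t ht
    have ht0 : t ≠ 0 := by omega
    simp only [if_neg ht0]
    rw [hz t (by omega), hz (t - 1) (by omega), zero_comp, sub_zero]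
  · intro n
    have hB : B (fun k => h (k + 1)) (n + D) = B h (n + D) - B h ((n + 1) + D) := by
      have := B_succ h (n + D)
      have e : n + D + 1 = (n + 1) + D := by omega
      rw [e] at this
      linear_combination this
    rw [hB, hrep n, hrep (n + 1)]
    have eRHS : ∀ t : ℕ, ((q t - if t = 0 then 0 else (q (t-1)).comp (X + C 1)).eval (n:ℂ)) * g (n+t)
        = (q t).eval (n:ℂ) * g (n+t)
          - ((if t = 0 then (0:Polynomial ℂ) else (q (t-1)).comp (X + C 1)).eval (n:ℂ)) * g (n+t) := by
      intro t
      rw [eval_sub]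
      ring
    rw [Finset.sum_congr rfl (fun t _ => eRHS t), Finset.sum_sub_distrib]
    congr 1
    · conv_rhs => rw [Finset.sum_range_succ]
      rw [hz (T+1) (by omega)]
      simp
    · conv_rhs => rw [Finset.sum_range_succ' (fun t => ((if t = 0 then (0:Polynomial ℂ) else (q (t - 1)).comp (X + C 1)).eval (n:ℂ)) * g (n + t)) (T+1)]
      have h0 : (if (0:ℕ) = 0 then (0:Polynomial ℂ) else (q (0 - 1)).comp (X + C 1)) = 0 := if_pos rfl
      rw [h0, eval_zero, zero_mul, add_zero]
      refine Finset.sum_congr rfl (fun t _ => ?_)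
      rw [if_neg (Nat.succ_ne_zero t)]
      simp only [Nat.add_sub_cancel]
      rw [eval_comp_X_add_one]
      have e2 : n + (t + 1) = (n + 1) + t := by omega
      rw [e2]
      push_cast
      ring_nf
lemma Rep_N {g h : ℕ → ℂ} {D T : ℕ} {q : ℕ → Polynomial ℂ} (hq : Rep g h D T q) :
    Rep g (fun k => (k : ℂ) * h k) (D + 1) (T + 1)
      (fun t => (X + C ((D:ℂ) + 1)) * ((if t = 0 then 0 else (q (t - 1)).comp (X + C 1)) - q t)) := by
  obtain ⟨hz, hrep⟩ := hq
  constructor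
  · intro t ht
    have ht0 : t ≠ 0 := by omega
    simp only [if_neg ht0]
    rw [hz t (by omega), hz (t - 1) (by omega), zero_comp, sub_zero, mul_zero]
  · intro n
    have hA : ∑ t ∈ Finset.range (T + 1 + 1),
        ((if t = 0 then (0:Polynomial ℂ) else (q (t - 1)).comp (X + C 1)).eval (n:ℂ)) * g (n + t)
        = ∑ t ∈ Finset.range (T + 1), (q t).eval ((n:ℂ) + 1) * g ((n + 1) + t) := by
      rw [Finset.sum_range_succ' (fun t => ((if t = 0 then (0:Polynomial ℂ) else (q (t - 1)).comp (X + C 1)).eval (n:ℂ)) * g (n + t)) (T+1)]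
      have h0 : (if (0:ℕ) = 0 then (0:Polynomial ℂ) else (q (0 - 1)).comp (X + C 1)) = 0 := if_pos rfl
      rw [h0, eval_zero, zero_mul, add_zero]
      refine Finset.sum_congr rfl (fun t _ => ?_)
      rw [if_neg (Nat.succ_ne_zero t)]
      simp only [Nat.add_sub_cancel]
      rw [eval_comp_X_add_one]
      have e2 : n + (t + 1) = (n + 1) + t := by omega
      rw [e2]
    have hB2 : ∑ t ∈ Finset.range (T + 1 + 1), (q t).eval (n:ℂ) * g (n + t)
        = ∑ t ∈ Finset.range (T + 1), (q t).eval (n:ℂ) * g (n + t) := by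
      rw [Finset.sum_range_succ, hz (T+1) (by omega)]
      simp
    have e : n + (D + 1) = (n + D) + 1 := by omega
    rw [e, B_N h (n + D)]
    have e3 : n + D + 1 = (n + 1) + D := by omega
    rw [e3, hrep n, hrep (n + 1)]
    have expand : ∀ t : ℕ,
        ((X + C ((D:ℂ) + 1)) * ((if t = 0 then 0 else (q (t - 1)).comp (X + C 1)) - q t)).eval (n:ℂ) * g (n + t)
        = ((n:ℂ) + ((D:ℂ) + 1)) *
            (((if t = 0 then (0:Polynomial ℂ) else (q (t - 1)).comp (X + C 1)).eval (n:ℂ)) * g (n + t)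
              - (q t).eval (n:ℂ) * g (n + t)) := by
      intro t
      rw [eval_mul, eval_sub, eval_add, eval_X, eval_C]
      ring
    rw [Finset.sum_congr rfl (fun t _ => expand t), ← Finset.mul_sum, Finset.sum_sub_distrib, hA, hB2]
    push_cast
    ring


lemma natDegree_comp_X_add_one (p : Polynomial ℂ) : (p.comp (X + C 1)).natDegree = p.natDegree := by
  rw [← taylor_apply]
  exact natDegree_taylor p 1

lemma coeff_comp_X_add_one {p : Polynomial ℂ} {m : ℕ} (hp : p.natDegree ≤ m) :
    (p.comp (X + C 1)).coeff m = p.coeff m := by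
  rcases lt_or_eq_of_le hp with h | h
  · rw [coeff_eq_zero_of_natDegree_lt (by rw [natDegree_comp_X_add_one]; exact h),
      coeff_eq_zero_of_natDegree_lt h]
  · have h1 : (p.comp (X + C 1)).natDegree = p.natDegree := natDegree_comp_X_add_one p
    have h2 := leadingCoeff_comp (p := p) (q := X + C 1)
      (by rw [natDegree_X_add_C]; exact one_ne_zero)
    rw [leadingCoeff_X_add_C, one_pow, mul_one] at h2
    calc (p.comp (X + C 1)).coeff m = (p.comp (X + C 1)).leadingCoeff := by
          rw [leadingCoeff, h1, h]
      _ = p.leadingCoeff := h2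
      _ = p.coeff m := by rw [leadingCoeff, h]

lemma coeff_succ_X_add_C_mul (a : ℂ) (p : Polynomial ℂ) (m : ℕ) :
    ((X + C a) * p).coeff (m + 1) = p.coeff m + a * p.coeff (m + 1) := by
  rw [add_mul, coeff_add, coeff_X_mul, coeff_C_mul]

def GoodAt (f h : ℕ → ℂ) (D T m : ℕ) (σ : ℂ) : Prop :=
  ∃ q, Rep (B f) h D T q ∧ (q T).natDegree ≤ m ∧ (q T).coeff m = σ

lemma Rep_congr {g h h' : ℕ → ℂ} {D T : ℕ} {q : ℕ → Polynomial ℂ}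
    (hq : Rep g h D T q) (e : ∀ k, h k = h' k) : Rep g h' D T q := by
  have : h = h' := funext e
  exact this ▸ hq

lemma good_shift (f : ℕ → ℂ) : ∀ i, GoodAt f (fun k => f (k + i)) 0 i 0 ((-1) ^ i) := by
  intro i
  induction i with
  | zero =>
    refine ⟨fun t => if t = 0 then 1 else 0,
      Rep_congr (Rep_zero f) (fun k => by rw [Nat.add_zero]), by simp, by simp⟩
  | succ i ih =>
    obtain ⟨q, hq, hd, hc⟩ := ih
    set q' : ℕ → Polynomial ℂ :=
      fun t => q t - if t = 0 then 0 else (q (t - 1)).comp (X + C 1) with hq'def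
    have htop : q' (i + 1) = -(q i).comp (X + C 1) := by
      show q (i+1) - (if i + 1 = 0 then 0 else (q (i + 1 - 1)).comp (X + C 1)) = _
      rw [if_neg (by omega : i + 1 ≠ 0), hq.1 (i+1) (by omega), zero_sub]
      congr 2
    have hRep : Rep (B f) (fun k => f (k + (i + 1))) 0 (i + 1) q' :=
      Rep_congr (Rep_S hq) (fun k => congrArg f (by omega))
    refine ⟨q', hRep, ?_, ?_⟩
    · rw [htop, natDegree_neg, natDegree_comp_X_add_one]; exact hd
    · rw [htop, coeff_neg, coeff_comp_X_add_one hd, hc, pow_succ]; ring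

lemma good_mono (f : ℕ → ℂ) : ∀ m i, GoodAt f (fun k => (k:ℂ) ^ m * f (k + i)) m (m + i) m ((-1) ^ i) := by
  intro m
  induction m with
  | zero =>
    intro i
    obtain ⟨q, hq, hd, hc⟩ := good_shift f i
    refine ⟨q, ?_, ?_, ?_⟩
    · rw [Nat.zero_add]; exact Rep_congr hq (fun k => by rw [pow_zero, one_mul])
    · rw [Nat.zero_add]; exact hd
    · rw [Nat.zero_add]; exact hc
  | succ m ih =>
    intro i
    obtain ⟨q, hq, hd, hc⟩ := ih i
    set q' : ℕ → Polynomial ℂ :=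
      fun t => (X + C ((m:ℂ) + 1)) * ((if t = 0 then 0 else (q (t - 1)).comp (X + C 1)) - q t)
      with hq'def
    have htop : q' (m + 1 + i) = (X + C ((m:ℂ) + 1)) * (q (m + i)).comp (X + C 1) := by
      show (X + C ((m:ℂ) + 1)) *
        ((if m + 1 + i = 0 then 0 else (q (m + 1 + i - 1)).comp (X + C 1)) - q (m + 1 + i)) = _
      rw [if_neg (by omega : m + 1 + i ≠ 0),
        hq.1 (m + 1 + i) (by omega), sub_zero,
        show m + 1 + i - 1 = m + i from by omega]
    have hRep : Rep (B f) (fun k => (k:ℂ) ^ (m + 1) * f (k + i)) (m + 1) (m + 1 + i) q' := by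
      have h1 := Rep_N hq
      rw [show m + i + 1 = m + 1 + i from by omega] at h1
      exact Rep_congr h1 (fun k => by rw [pow_succ]; ring)
    refine ⟨q', hRep, ?_, ?_⟩
    · rw [htop]
      refine le_trans natDegree_mul_le ?_
      rw [natDegree_X_add_C, natDegree_comp_X_add_one]
      omega
    · rw [htop, coeff_succ_X_add_C_mul, coeff_comp_X_add_one hd, hc,
        coeff_eq_zero_of_natDegree_lt (by rw [natDegree_comp_X_add_one]; omega)]
      ring

lemma good_raise {f h : ℕ → ℂ} {D T m : ℕ} {σ : ℂ} (hG : GoodAt f h D T m σ) :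
    ∀ E, GoodAt f h (D + E) (T + E) m σ := by
  intro E
  induction E with
  | zero => exact hG
  | succ E ih =>
    obtain ⟨q, hq, hd, hc⟩ := ih
    set q' : ℕ → Polynomial ℂ :=
      fun t => if t = 0 then 0 else (q (t - 1)).comp (X + C 1) with hq'def
    have htop : q' (T + E + 1) = (q (T + E)).comp (X + C 1) := by
      show (if T + E + 1 = 0 then 0 else (q (T + E + 1 - 1)).comp (X + C 1)) = _
      rw [if_neg (by omega : T + E + 1 ≠ 0), show T + E + 1 - 1 = T + E from by omega]
    have hRep : Rep (B f) h (D + (E + 1)) (T + (E + 1)) q' := Rep_raise hq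
    refine ⟨q', hRep, ?_, ?_⟩
    · rw [show T + (E + 1) = T + E + 1 from by omega, htop, natDegree_comp_X_add_one]
      exact hd
    · rw [show T + (E + 1) = T + E + 1 from by omega, htop, coeff_comp_X_add_one hd]
      exact hc



theorem holonomic_B (f : ℕ → ℂ) (hf : HolonomicSeq f) : HolonomicSeq (B f) := by
  obtain ⟨d, p, hp0, hrec⟩ := hf
  set P : ℕ → Polynomial ℂ := fun i => p (d - i) with hP
  set Ds : ℕ := (Finset.range (d + 1)).sup (fun i => (P i).natDegree) with hDs
  have key : ∀ i m : ℕ, ∃ q : ℕ → Polynomial ℂ,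
      m ≤ Ds →
      (Rep (B f) (fun k => (k:ℂ) ^ m * f (k + i)) Ds (Ds + i) q ∧
       (q (Ds + i)).natDegree ≤ m ∧ (q (Ds + i)).coeff m = (-1 : ℂ) ^ i) := by
    intro i m
    by_cases hm : m ≤ Ds
    · obtain ⟨q, h1, h2, h3⟩ := good_raise (good_mono f m i) (Ds - m)
      rw [show m + (Ds - m) = Ds from by omega] at h1
      rw [show m + i + (Ds - m) = Ds + i from by omega] at h1 h2 h3
      exact ⟨q, fun _ => ⟨h1, h2, h3⟩⟩
    · exact ⟨fun _ => 0, fun h => absurd h hm⟩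
  choose Q hQ using key
  set Qt : ℕ → Polynomial ℂ := fun t =>
    ∑ i ∈ Finset.range (d + 1), ∑ m ∈ Finset.range ((P i).natDegree + 1),
      C ((P i).coeff m) * Q i m t with hQt
  have hmle : ∀ i, i ∈ Finset.range (d + 1) → ∀ m, m ∈ Finset.range ((P i).natDegree + 1) → m ≤ Ds := by
    intro i hi m hm
    have h1 : (P i).natDegree ≤ Ds := hDs ▸ Finset.le_sup (f := fun i => (P i).natDegree) hi
    have h2 : m ≤ (P i).natDegree := Nat.lt_succ_iff.mp (Finset.mem_range.mp hm)
    omega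
  have hzero : ∀ k : ℕ, ∑ i ∈ Finset.range (d + 1), (P i).eval (k:ℂ) * f (k + i) = 0 := by
    intro k
    calc ∑ i ∈ Finset.range (d + 1), (P i).eval (k:ℂ) * f (k + i)
        = ∑ j ∈ Finset.range (d + 1), (p ((d+1) - 1 - j)).eval (k:ℂ) * f (k + (d - ((d+1) - 1 - j))) := by
          refine Finset.sum_congr rfl fun i hi => ?_
          have hi' : i ≤ d := Nat.lt_succ_iff.mp (Finset.mem_range.mp hi)
          rw [hP]
          congr 2 <;> omega
      _ = ∑ j ∈ Finset.range (d + 1), (p j).eval (k:ℂ) * f (k + (d - j)) :=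
          Finset.sum_range_reflect (fun j => (p j).eval (k:ℂ) * f (k + (d - j))) (d + 1)
      _ = 0 := hrec k
  have main : ∀ n : ℕ, ∑ t ∈ Finset.range (Ds + d + 1), (Qt t).eval (n:ℂ) * (B f) (n + t) = 0 := by
    intro n
    have inner : ∀ i ∈ Finset.range (d + 1), ∀ m ∈ Finset.range ((P i).natDegree + 1),
        ∑ t ∈ Finset.range (Ds + d + 1), (Q i m t).eval (n:ℂ) * B f (n + t)
          = B (fun k => (k:ℂ) ^ m * f (k + i)) (n + Ds) := by
      intro i hi m hm
      obtain ⟨hrep, _, _⟩ := hQ i m (hmle i hi m hm)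
      have hi' : i ≤ d := Nat.lt_succ_iff.mp (Finset.mem_range.mp hi)
      rw [← Finset.sum_subset (Finset.range_subset_range.mpr (show Ds + i + 1 ≤ Ds + d + 1 by omega))
        (fun t _ ht => by
          rw [hrep.1 t (by simp only [Finset.mem_range] at ht; omega), eval_zero, zero_mul])]
      exact (hrep.2 n).symm
    have step1 : ∑ t ∈ Finset.range (Ds + d + 1), (Qt t).eval (n:ℂ) * (B f) (n + t)
        = ∑ i ∈ Finset.range (d + 1), ∑ m ∈ Finset.range ((P i).natDegree + 1),
            (P i).coeff m * (∑ t ∈ Finset.range (Ds + d + 1), (Q i m t).eval (n:ℂ) * B f (n + t)) := by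
      simp only [hQt, eval_finset_sum, eval_mul, eval_C, Finset.sum_mul]
      rw [Finset.sum_comm]
      refine Finset.sum_congr rfl fun i _ => ?_
      rw [Finset.sum_comm]
      refine Finset.sum_congr rfl fun m _ => ?_
      rw [Finset.mul_sum]
      refine Finset.sum_congr rfl fun t _ => by ring
    rw [step1, Finset.sum_congr rfl (fun i hi => Finset.sum_congr rfl (fun m hm => by
      rw [inner i hi m hm]))]
    have step3 : ∀ i ∈ Finset.range (d + 1),
        ∑ m ∈ Finset.range ((P i).natDegree + 1),
          (P i).coeff m * B (fun k => (k:ℂ) ^ m * f (k + i)) (n + Ds)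
        = ∑ k ∈ Finset.range (n + Ds + 1),
            (((n + Ds).choose k : ℂ) * (-1) ^ k) * ((P i).eval (k:ℂ) * f (k + i)) := by
      intro i _
      unfold B
      simp only [Finset.mul_sum]
      rw [Finset.sum_comm]
      refine Finset.sum_congr rfl fun k _ => ?_
      rw [eval_eq_sum_range, Finset.sum_mul, Finset.mul_sum]
      refine Finset.sum_congr rfl fun m _ => by ring
    rw [Finset.sum_congr rfl step3, Finset.sum_comm]
    refine Finset.sum_eq_zero fun k _ => ?_
    rw [← Finset.mul_sum, hzero k, mul_zero]
  have hPd : P d = p 0 := by rw [hP]; simp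
  set M : ℕ := (p 0).natDegree with hM
  have hcoeffM : (Qt (Ds + d)).coeff M = (p 0).coeff M * (-1 : ℂ) ^ d := by
    have expand : (Qt (Ds + d)).coeff M
        = ∑ i ∈ Finset.range (d + 1), ∑ m ∈ Finset.range ((P i).natDegree + 1),
            (P i).coeff m * (Q i m (Ds + d)).coeff M := by
      rw [hQt, finset_sum_coeff]
      refine Finset.sum_congr rfl fun i _ => ?_
      rw [finset_sum_coeff]
      exact Finset.sum_congr rfl fun m _ => coeff_C_mul _
    rw [expand, Finset.sum_range_succ]
    have hlow : ∀ i ∈ Finset.range d,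
        ∑ m ∈ Finset.range ((P i).natDegree + 1),
          (P i).coeff m * (Q i m (Ds + d)).coeff M = 0 := by
      intro i hi
      have hi' : i < d := Finset.mem_range.mp hi
      refine Finset.sum_eq_zero fun m hm => ?_
      have hQ0 := (hQ i m (hmle i (Finset.mem_range.mpr (by omega)) m hm)).1.1 (Ds + d) (by omega)
      rw [hQ0, coeff_zero, mul_zero]
    rw [Finset.sum_eq_zero hlow, zero_add, hPd,
      show (p 0).natDegree = M from hM.symm, Finset.sum_range_succ]
    have hlow2 : ∀ m ∈ Finset.range M,
        (p 0).coeff m * (Q d m (Ds + d)).coeff M = 0 := by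
      intro m hm
      have hm' : m < M := Finset.mem_range.mp hm
      have hmem : m ∈ Finset.range ((P d).natDegree + 1) := by
        rw [hPd]; exact Finset.mem_range.mpr (by omega)
      obtain ⟨_, hdeg, _⟩ := hQ d m (hmle d (Finset.mem_range.mpr (by omega)) m hmem)
      rw [coeff_eq_zero_of_natDegree_lt (lt_of_le_of_lt hdeg hm'), mul_zero]
    rw [Finset.sum_eq_zero hlow2, zero_add]
    have hmemM : M ∈ Finset.range ((P d).natDegree + 1) := by
      rw [hPd]; exact Finset.mem_range.mpr (by omega)
    obtain ⟨_, _, hcoef⟩ := hQ d M (hmle d (Finset.mem_range.mpr (by omega)) M hmemM)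
    rw [hcoef]
  have hQtne : Qt (Ds + d) ≠ 0 := by
    intro hcon
    rw [hcon, coeff_zero] at hcoeffM
    have h1 : (p 0).coeff M ≠ 0 := by
      rw [hM, coeff_natDegree]
      exact leadingCoeff_ne_zero.mpr hp0
    rcases mul_eq_zero.mp hcoeffM.symm with h | h
    · exact h1 h
    · exact pow_ne_zero d (by norm_num : (-1:ℂ) ≠ 0) h
  refine ⟨Ds + d, fun j => Qt (Ds + d - j), by simpa using hQtne, ?_⟩
  intro n
  have hr := Finset.sum_range_reflect (fun t => (Qt t).eval (n:ℂ) * B f (n + t)) (Ds + d + 1)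
  calc ∑ j ∈ Finset.range (Ds + d + 1), (Qt (Ds + d - j)).eval (n:ℂ) * B f (n + (Ds + d - j))
      = ∑ j ∈ Finset.range (Ds + d + 1),
          (Qt ((Ds + d + 1) - 1 - j)).eval (n:ℂ) * B f (n + ((Ds + d + 1) - 1 - j)) := by
        refine Finset.sum_congr rfl fun j hj => ?_
        have : (Ds + d + 1) - 1 - j = Ds + d - j := by omega
        rw [this]
    _ = ∑ t ∈ Finset.range (Ds + d + 1), (Qt t).eval (n:ℂ) * B f (n + t) := hr
    _ = 0 := main n


end BinDiffProof
end

/-- Alternating binomial differencing preserves holonomicity of sequences. -/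
theorem holonomicSeq_binomial_differences (f : ℕ → ℂ) (hf : HolonomicSeq f) :
    HolonomicSeq (fun n => ∑ k ∈ Finset.range (n + 1), (n.choose k : ℂ) * (-1) ^ k * f k) :=
  BinDiffProof.holonomic_B f hf
end

section
/- The class of holonomic formal power series over ℂ is closed under addition and under Cauchy product (multiplication). -/
open Finset

/-- Formal derivative of a power series. -/
noncomputable def psDeriv (f : PowerSeries ℂ) : PowerSeries ℂ :=
  PowerSeries.mk fun n => ((n : ℂ) + 1) * PowerSeries.coeff (R := ℂ) (n + 1) f

/-- A formal power series is holonomic (D-finite) if it satisfies a linear ODE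
with polynomial coefficients whose leading coefficient is nonzero. -/
def HolonomicPS (f : PowerSeries ℂ) : Prop :=
  ∃ (e : ℕ) (q : ℕ → Polynomial ℂ), q 0 ≠ 0 ∧
    ∑ k ∈ Finset.range (e + 1), (q k : PowerSeries ℂ) * psDeriv^[e - k] f = 0

/-!
A series is holonomic exactly when it lies in the `ℂ(X)`-span of a finite family of series
whose span is stable under `d/dX`: the family `f, f', …, f⁽ᵉ⁻¹⁾` in one direction, and in the
other the derivatives of `f` all lie in a finite-dimensional space, so one of them depends on
the earlier ones. The Leibniz rule makes the union of two stable families, and the family of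
their pairwise products, stable again; these contain `f + g` and `f * g`.
-/

open Polynomial PowerSeries Submodule
open scoped nonZeroDivisors

theorem exists_mem_span_range_fin_of_forall_mem {K V : Type*} [DivisionRing K] [AddCommGroup V]
    [Module K V] {W : Submodule K V} [FiniteDimensional K W] {v : ℕ → V} (hv : ∀ n, v n ∈ W) :
    ∃ e, v e ∈ span K (Set.range fun k : Fin e => v k) := by
  by_contra! h
  have hli : ∀ N, LinearIndependent K fun k : Fin N => v k := by
    intro N
    induction N with
    | zero => exact linearIndependent_empty_type
    | succ N ih => exact linearIndependent_finSucc'.mpr ⟨ih, h N⟩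
  have hliW : LinearIndependent K fun k : Fin (Module.finrank K W + 1) => (⟨v k, hv k⟩ : W) :=
    .of_comp W.subtype (hli _)
  simpa using hliW.fintype_card_le_finrank

theorem Finset.sum_range_succ_reflect {M : Type*} [AddCommMonoid M] (F : ℕ → ℕ → M) (e : ℕ) :
    ∑ k ∈ range (e + 1), F k (e - k) = ∑ k ∈ range e, F (e - k) k + F 0 e := by
  rw [← sum_range_reflect, sum_range_succ, add_tsub_cancel_right, tsub_self, tsub_zero]
  congr 1
  refine sum_congr rfl fun j hj => ?_
  have hj : j < e := mem_range.mp hj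
  rw [Nat.sub_sub_self hj.le]

-- `LocalizedModule ℂ[X]⁰ ℂ⟦X⟧` is `ℂ(X) ⊗[ℂ[X]] ℂ⟦X⟧`; spans over `ℂ(X)` are taken there.
local notation "ℂ(X)" => FractionRing ℂ[X]
local notation "emb" => LocalizedModule.mkLinearMap ℂ[X]⁰ ℂ⟦X⟧

theorem mkLinearMap_powerSeries_injective : Function.Injective emb := by
  refine (IsLocalizedModule.injective_iff_isRegular ℂ[X]⁰ _).mpr fun b x y hxy => ?_
  exact mul_left_cancel₀ (by simp) hxy

noncomputable def ratSpan {ι : Type*} (h : ι → ℂ⟦X⟧) : Submodule ℂ[X] ℂ⟦X⟧ :=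
  ((span ℂ(X) (Set.range (emb ∘ h))).restrictScalars ℂ[X]).comap emb

theorem polynomial_smul_eq_coe_mul (p : ℂ[X]) (x : ℂ⟦X⟧) : p • x = (p : ℂ⟦X⟧) * x := rfl

theorem derivative_polynomial_smul (p : ℂ[X]) (x : ℂ⟦X⟧) :
    d⁄dX ℂ (p • x) = derivative p • x + p • d⁄dX ℂ x := by
  simp only [polynomial_smul_eq_coe_mul]
  rw [Derivation.leibniz, derivative_coe, smul_eq_mul, smul_eq_mul, add_comm, mul_comm x]

theorem psDeriv_eq_derivative : psDeriv = d⁄dX ℂ := by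
  ext f n
  rw [psDeriv, coeff_mk, PowerSeries.coeff_derivative, mul_comm]

section ratSpan

variable {ι κ : Type*} {h : ι → ℂ⟦X⟧} {k : κ → ℂ⟦X⟧} {x y : ℂ⟦X⟧}

theorem mem_ratSpan : x ∈ ratSpan h ↔ emb x ∈ span ℂ(X) (Set.range (emb ∘ h)) := Iff.rfl

theorem mem_ratSpan_self (h : ι → ℂ⟦X⟧) (i : ι) : h i ∈ ratSpan h :=
  subset_span ⟨i, rfl⟩

theorem ratSpan_le {h' : κ → ℂ⟦X⟧} (hh : ∀ i, h i ∈ ratSpan h') : ratSpan h ≤ ratSpan h' := by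
  intro x hx
  rw [mem_ratSpan] at hx ⊢
  exact span_le.mpr (Set.range_subset_iff.mpr fun i => mem_ratSpan.mp (hh i)) hx

theorem smul_mem_ratSpan_iff {b : ℂ[X]} (hb : b ≠ 0) : b • x ∈ ratSpan h ↔ x ∈ ratSpan h := by
  rw [mem_ratSpan, mem_ratSpan, map_smul, ← algebraMap_smul ℂ(X)]
  exact smul_mem_iff _ (IsFractionRing.to_map_ne_zero_of_mem_nonZeroDivisors
    (mem_nonZeroDivisors_of_ne_zero hb))

theorem mem_ratSpan_iff [Fintype ι] :
    x ∈ ratSpan h ↔ ∃ b : ℂ[X], b ≠ 0 ∧ ∃ a : ι → ℂ[X], b • x = ∑ i, a i • h i := by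
  constructor
  · intro hx
    obtain ⟨c, hc⟩ := (mem_span_range_iff_exists_fun ℂ(X)).mp hx
    obtain ⟨b, hb⟩ := IsLocalization.exist_integer_multiples_of_finite ℂ[X]⁰ c
    choose a ha using hb
    refine ⟨b, nonZeroDivisors.coe_ne_zero b, a, mkLinearMap_powerSeries_injective ?_⟩
    rw [map_smul, ← hc, map_sum, Finset.smul_sum]
    refine Finset.sum_congr rfl fun i _ => ?_
    rw [map_smul, ← algebraMap_smul ℂ(X) (a i), ha, ← smul_assoc]
    rfl
  · rintro ⟨b, hb, a, hrel⟩
    rw [← smul_mem_ratSpan_iff hb, hrel]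
    exact sum_mem fun i _ => smul_mem _ _ (mem_ratSpan_self h i)

def DerivClosed (h : ι → ℂ⟦X⟧) : Prop :=
  ∀ i, d⁄dX ℂ (h i) ∈ ratSpan h

theorem DerivClosed.derivative_mem [Fintype ι] (hh : DerivClosed h)
    (hx : x ∈ ratSpan h) : d⁄dX ℂ x ∈ ratSpan h := by
  obtain ⟨b, hb, a, hrel⟩ := mem_ratSpan_iff.mp hx
  have hderiv : b • d⁄dX ℂ x
      = ∑ i, (derivative (a i) • h i + a i • d⁄dX ℂ (h i)) - derivative b • x := by
    have := congrArg (d⁄dX ℂ) hrel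
    rw [derivative_polynomial_smul, map_sum] at this
    simp only [derivative_polynomial_smul] at this
    rw [eq_sub_iff_add_eq, add_comm, this]
  rw [← smul_mem_ratSpan_iff hb, hderiv]
  refine sub_mem (sum_mem fun i _ => add_mem ?_ ?_) (smul_mem _ _ hx)
  · exact smul_mem _ _ (mem_ratSpan_self h i)
  · exact smul_mem _ _ (hh i)

theorem ratSpan_le_sumElim_left : ratSpan h ≤ ratSpan (Sum.elim h k) :=
  ratSpan_le fun i => mem_ratSpan_self (Sum.elim h k) (.inl i)

theorem ratSpan_le_sumElim_right : ratSpan k ≤ ratSpan (Sum.elim h k) :=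
  ratSpan_le fun j => mem_ratSpan_self (Sum.elim h k) (.inr j)

theorem add_mem_ratSpan_sumElim (hx : x ∈ ratSpan h) (hy : y ∈ ratSpan k) :
    x + y ∈ ratSpan (Sum.elim h k) :=
  add_mem (ratSpan_le_sumElim_left hx) (ratSpan_le_sumElim_right hy)

theorem mul_mem_ratSpan_prod [Fintype ι] [Fintype κ] (hx : x ∈ ratSpan h) (hy : y ∈ ratSpan k) :
    x * y ∈ ratSpan fun p : ι × κ => h p.1 * k p.2 := by
  obtain ⟨b, hb, a, hx⟩ := mem_ratSpan_iff.mp hx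
  obtain ⟨c, hc, a', hy⟩ := mem_ratSpan_iff.mp hy
  refine mem_ratSpan_iff.mpr ⟨b * c, mul_ne_zero hb hc, fun p => a p.1 * a' p.2, ?_⟩
  rw [← smul_mul_smul_comm, hx, hy, Finset.sum_mul_sum, Fintype.sum_prod_type]
  simp only [smul_mul_smul_comm]

theorem DerivClosed.sumElim (hh : DerivClosed h) (hk : DerivClosed k) :
    DerivClosed (Sum.elim h k) := by
  rintro (i | j)
  · exact ratSpan_le_sumElim_left (hh i)
  · exact ratSpan_le_sumElim_right (hk j)

theorem DerivClosed.mul [Fintype ι] [Fintype κ] (hh : DerivClosed h) (hk : DerivClosed k) :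
    DerivClosed fun p : ι × κ => h p.1 * k p.2 := by
  rintro ⟨i, j⟩
  rw [Derivation.leibniz, smul_eq_mul, smul_eq_mul, mul_comm (k j)]
  exact add_mem (mul_mem_ratSpan_prod (mem_ratSpan_self h i) (hk j))
    (mul_mem_ratSpan_prod (hh i) (mem_ratSpan_self k j))

end ratSpan

theorem holonomicPS_iff_exists_relation {f : ℂ⟦X⟧} :
    HolonomicPS f ↔ ∃ e, ∃ b : ℂ[X], b ≠ 0 ∧ ∃ a : ℕ → ℂ[X],
      b • (d⁄dX ℂ)^[e] f = ∑ k ∈ range e, a k • (d⁄dX ℂ)^[k] f := by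
  simp only [HolonomicPS, psDeriv_eq_derivative, ← polynomial_smul_eq_coe_mul]
  constructor
  · rintro ⟨e, q, hq0, hrel⟩
    refine ⟨e, q 0, hq0, fun k => -q (e - k), ?_⟩
    rw [sum_range_succ_reflect fun i j => q i • (d⁄dX ℂ)^[j] f] at hrel
    simp only [neg_smul, sum_neg_distrib]
    exact eq_neg_of_add_eq_zero_right hrel
  · rintro ⟨e, b, hb, a, hrel⟩
    refine ⟨e, fun j => if j = 0 then b else -a (e - j), by simpa using hb, ?_⟩
    have hlower : ∑ k ∈ range e, (if e - k = 0 then b else -a (e - (e - k))) • (d⁄dX ℂ)^[k] f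
        = -(b • (d⁄dX ℂ)^[e] f) := by
      rw [hrel, ← sum_neg_distrib]
      refine sum_congr rfl fun k hk => ?_
      have hk : k < e := mem_range.mp hk
      rw [if_neg (by omega), Nat.sub_sub_self hk.le, neg_smul]
    rw [sum_range_succ_reflect fun i j => (if i = 0 then b else -a (e - i)) • (d⁄dX ℂ)^[j] f,
      hlower, if_pos rfl, neg_add_cancel]

theorem holonomicPS_iff_exists_iterate_mem_ratSpan {f : ℂ⟦X⟧} :
    HolonomicPS f ↔ ∃ e, (d⁄dX ℂ)^[e] f ∈ ratSpan fun k : Fin e => (d⁄dX ℂ)^[k] f := by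
  simp only [holonomicPS_iff_exists_relation, mem_ratSpan_iff]
  refine exists_congr fun e => exists_congr fun b => and_congr_right fun _ => ⟨?_, ?_⟩
  · rintro ⟨a, ha⟩
    exact ⟨fun k => a k, by rw [ha, ← Fin.sum_univ_eq_sum_range]⟩
  · rintro ⟨a, ha⟩
    refine ⟨fun k => if hk : k < e then a ⟨k, hk⟩ else 0, ?_⟩
    rw [ha, ← Fin.sum_univ_eq_sum_range]
    simp

theorem holonomicPS_of_mem_ratSpan {ι : Type*} [Fintype ι] {h : ι → ℂ⟦X⟧} (hh : DerivClosed h)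
    {f : ℂ⟦X⟧} (hf : f ∈ ratSpan h) : HolonomicPS f := by
  have hiter : ∀ n, (d⁄dX ℂ)^[n] f ∈ ratSpan h := fun n => by
    induction n with
    | zero => exact hf
    | succ n ih => exact Function.iterate_succ_apply' (d⁄dX ℂ) n f ▸ hh.derivative_mem ih
  have : FiniteDimensional ℂ(X) (span ℂ(X) (Set.range (emb ∘ h))) :=
    FiniteDimensional.span_of_finite _ (Set.finite_range _)
  exact holonomicPS_iff_exists_iterate_mem_ratSpan.mpr
    (exists_mem_span_range_fin_of_forall_mem (v := fun n => emb ((d⁄dX ℂ)^[n] f))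
      fun n => mem_ratSpan.mp (hiter n))

theorem HolonomicPS.exists_derivClosed {f : ℂ⟦X⟧} (hf : HolonomicPS f) :
    ∃ (n : ℕ) (h : Fin n → ℂ⟦X⟧), DerivClosed h ∧ f ∈ ratSpan h := by
  obtain ⟨e, he⟩ := holonomicPS_iff_exists_iterate_mem_ratSpan.mp hf
  have hle : ∀ j ≤ e, (d⁄dX ℂ)^[j] f ∈ ratSpan fun k : Fin e => (d⁄dX ℂ)^[k] f := fun j hj =>
    hj.lt_or_eq.elim (fun hj => mem_ratSpan_self (fun k : Fin e => (d⁄dX ℂ)^[k] f) ⟨j, hj⟩)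
      (· ▸ he)
  refine ⟨e, _, fun k => ?_, hle 0 e.zero_le⟩
  exact Function.iterate_succ_apply' (d⁄dX ℂ) k f ▸ hle (k + 1) k.isLt

/-- Holonomic formal power series are closed under addition and multiplication. -/
theorem holonomicPS_add_mul (f g : PowerSeries ℂ)
    (hf : HolonomicPS f) (hg : HolonomicPS g) :
    HolonomicPS (f + g) ∧ HolonomicPS (f * g) := by
  obtain ⟨n, h, hh, hfh⟩ := hf.exists_derivClosed
  obtain ⟨m, k, hk, hgk⟩ := hg.exists_derivClosed
  exact ⟨holonomicPS_of_mem_ratSpan (hh.sumElim hk) (add_mem_ratSpan_sumElim hfh hgk),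
    holonomicPS_of_mem_ratSpan (hh.mul hk) (mul_mem_ratSpan_prod hfh hgk)⟩
end

section
/- For real t → 0⁺, the sum Σ_{n≥2} (log log n) e^{-nt} is asymptotically equivalent to (log log(1/t))/t. -/
/-!
With `x = e^{-t}` the sum is `∑ₘ log (log m) xᵐ`. The tangent line of the concave `log` at
`log (1/t)` gives `log (log m) ≤ log (log (1/t)) + t m / log (1/t)`, and summing against `xᵐ`
bounds the sum by `log (log (1/t)) / (1 - x) + O(1 / (t log (1/t)))`. Conversely
`log (log m) ≥ log (log (1/t)) - log 2` as soon as `m ≥ t^{-1/2}`, and `log (log m) ≥ -1` always;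
since `x^{t^{-1/2}} → 1`, the terms below `t^{-1/2}` carry a negligible part of the weight.
Both bounds are `∼ log (log (1/t)) / t` because `1 - e^{-t} ∼ t`.
-/

open Filter Asymptotics Topology Real

section GeometricWeights

variable {f : ℕ → ℝ} {x : ℝ}

lemma summable_mul_geometric_of_le_linear {c A B : ℝ} (hlo : ∀ m, c ≤ f m)
    (hhi : ∀ m, f m ≤ A + B * m) (hx0 : 0 ≤ x) (hx1 : x < 1) :
    Summable fun m => f m * x ^ m := by
  have hgeom := summable_geometric_of_lt_one hx0 hx1
  have hlin : Summable fun m : ℕ => ((A - c) + B * m) * x ^ m := by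
    have hx : ‖x‖ < 1 := by rwa [norm_of_nonneg hx0]
    simpa [add_mul, mul_assoc] using
      (hgeom.mul_left (A - c)).add ((summable_pow_mul_geometric_of_norm_lt_one 1 hx).mul_left B)
  have hshift : Summable fun m => (f m - c) * x ^ m :=
    hlin.of_nonneg_of_le (fun m => mul_nonneg (sub_nonneg.2 (hlo m)) (pow_nonneg hx0 m))
      fun m => mul_le_mul_of_nonneg_right (by linarith [hhi m]) (pow_nonneg hx0 m)
  simpa [sub_mul] using hshift.add (hgeom.mul_left c)

lemma tsum_mul_geometric_le_of_le_linear {A B : ℝ} (hhi : ∀ m, f m ≤ A + B * m)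
    (hs : Summable fun m => f m * x ^ m) (hx0 : 0 ≤ x) (hx1 : x < 1) :
    ∑' m, f m * x ^ m ≤ A / (1 - x) + B * (x / (1 - x) ^ 2) := by
  have hx : ‖x‖ < 1 := by rwa [norm_of_nonneg hx0]
  have hlin := ((hasSum_geometric_of_lt_one hx0 hx1).mul_left A).add
    ((hasSum_coe_mul_geometric_of_norm_lt_one hx).mul_left B)
  refine hasSum_le (fun m => ?_) hs.hasSum (by simpa [div_eq_mul_inv] using hlin)
  have := mul_le_mul_of_nonneg_right (hhi m) (pow_nonneg hx0 m)
  linarith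

lemma le_tsum_mul_geometric {c b : ℝ} (N : ℕ) (hlo : ∀ m, c ≤ f m)
    (htail : ∀ m, N ≤ m → b ≤ f m) (hs : Summable fun m => f m * x ^ m) (hx0 : 0 ≤ x)
    (hx1 : x < 1) :
    (c * (1 - x ^ N) + b * x ^ N) / (1 - x) ≤ ∑' m, f m * x ^ m := by
  have hx1' : 0 < 1 - x := by linarith
  have hhead : c * (1 - x ^ N) / (1 - x) ≤ ∑ m ∈ Finset.range N, f m * x ^ m := by
    have hgeom : ∑ m ∈ Finset.range N, c * x ^ m = c * (1 - x ^ N) / (1 - x) := by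
      rw [← Finset.mul_sum, geom_sum_eq hx1.ne, mul_div_assoc, ← neg_div_neg_eq]
      ring_nf
    rw [← hgeom]
    exact Finset.sum_le_sum fun m _ => mul_le_mul_of_nonneg_right (hlo m) (pow_nonneg hx0 m)
  have htail' : b * x ^ N / (1 - x) ≤ ∑' m, f (m + N) * x ^ (m + N) := by
    have hgeom := (hasSum_geometric_of_lt_one hx0 hx1).mul_left (b * x ^ N)
    refine hasSum_le (fun m => ?_) (by simpa [div_eq_mul_inv] using hgeom)
      ((summable_nat_add_iff N).2 hs).hasSum
    have := mul_le_mul_of_nonneg_right (htail (m + N) (by omega)) (pow_nonneg hx0 (m + N))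
    rw [pow_add] at this ⊢
    linarith
  rw [← hs.sum_add_tsum_nat_add N, add_div]
  exact add_le_add hhead htail'

end GeometricWeights

lemma isEquivalent_of_mul_le_of_le_mul {α : Type*} {l : Filter α} {f g lo hi : α → ℝ}
    (hg : ∀ᶠ a in l, 0 < g a) (hlo : Tendsto lo l (𝓝 1)) (hhi : Tendsto hi l (𝓝 1))
    (hlof : ∀ᶠ a in l, lo a * g a ≤ f a) (hfhi : ∀ᶠ a in l, f a ≤ hi a * g a) :
    f ~[l] g := by
  rw [isEquivalent_iff_tendsto_one (hg.mono fun a ha => ha.ne')]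
  refine tendsto_of_tendsto_of_tendsto_of_le_of_le' hlo hhi ?_ ?_
  · filter_upwards [hg, hlof] with a hga ha
    exact (le_div_iff₀ hga).2 ha
  · filter_upwards [hg, hfhi] with a hga ha
    exact (div_le_iff₀ hga).2 ha

namespace Real

lemma neg_one_le_log_log_natCast (m : ℕ) : -1 ≤ log (log m) := by
  rcases Nat.lt_or_ge m 2 with hm | hm
  · interval_cases m <;> simp
  have hlog : 1 / 2 < log m := by
    have h2 : log 2 ≤ log m := log_le_log two_pos (by exact_mod_cast hm)
    linarith [log_two_gt_d9]
  have := one_sub_inv_le_log_of_pos (by linarith : 0 < log m)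
  have : (log m)⁻¹ < 2 := by rw [inv_lt_comm₀ (by linarith) two_pos]; linarith
  linarith

lemma log_natCast_le_log_add_div {s : ℝ} (hs : 0 < s) (hlog : 1 ≤ log s) (m : ℕ) :
    log m ≤ log s + m / s - 1 := by
  rcases m.eq_zero_or_pos with rfl | hm
  · simpa using (sub_nonneg.2 hlog)
  have hm' : (0 : ℝ) < m := by exact_mod_cast hm
  have := log_le_sub_one_of_pos (div_pos hm' hs)
  rw [log_div hm'.ne' hs.ne'] at this
  linarith

lemma log_log_natCast_le {s : ℝ} (hs : exp 1 ≤ s) (m : ℕ) :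
    log (log m) ≤ log (log s) + (s * log s)⁻¹ * m := by
  have hs0 : 0 < s := (exp_pos 1).trans_le hs
  have hu : 1 ≤ log s := (le_log_iff_exp_le hs0).2 hs
  have hfrac : 0 ≤ (s * log s)⁻¹ * m := by positivity
  rcases (log_natCast_nonneg m).eq_or_lt with hm | hm
  · rw [← hm, log_zero]
    linarith [log_nonneg hu]
  have hle := log_le_sub_one_of_pos (div_pos hm (by linarith : 0 < log s))
  rw [log_div hm.ne' (by linarith)] at hle
  have hm_le := log_natCast_le_log_add_div hs0 hu m
  have : log m / log s - 1 ≤ (s * log s)⁻¹ * m := by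
    rw [div_sub_one (by linarith), ← div_eq_inv_mul, ← div_div]
    exact div_le_div_of_nonneg_right (by linarith) (by linarith)
  linarith

lemma summable_log_log_natCast_mul_pow {x : ℝ} (hx0 : 0 ≤ x) (hx1 : x < 1) :
    Summable fun m : ℕ => log (log m) * x ^ m :=
  summable_mul_geometric_of_le_linear neg_one_le_log_log_natCast
    (log_log_natCast_le le_rfl) hx0 hx1

lemma log_log_sub_log_two_le_log_log {s y : ℝ} (hs : 1 < s) (hy : √s ≤ y) :
    log (log s) - log 2 ≤ log (log y) := by
  have hls : 0 < log s := log_pos hs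
  have hsqrt : log s / 2 ≤ log y := by
    rw [← log_sqrt (by linarith)]
    exact log_le_log (sqrt_pos.2 (by linarith)) hy
  rw [← log_div hls.ne' two_ne_zero]
  exact log_le_log (by positivity) hsqrt

/-- `log (log m)` vanishes at `m = 0, 1` (as `log 0 = 0`), so the sum may start at `m = 0`. -/
lemma tsum_log_log_add_two_mul_exp (t : ℝ) :
    ∑' n : ℕ, log (log (n + 2)) * exp (-((n : ℝ) + 2) * t)
      = ∑' m : ℕ, log (log m) * exp (-t) ^ m := by
  have hsupp : (Function.support fun m : ℕ => log (log m) * exp (-t) ^ m)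
      ⊆ Set.range (· + 2) := by
    intro m hm
    rcases Nat.lt_or_ge m 2 with h | h
    · interval_cases m <;> simp at hm
    · exact ⟨m - 2, Nat.sub_add_cancel h⟩
  rw [← (add_left_injective 2).tsum_eq hsupp]
  congr 1 with n
  rw [← exp_nat_mul]
  push_cast
  ring_nf

lemma tsum_log_log_mul_exp_neg_pow_le {t : ℝ} (ht : 0 < t) (hs : exp 1 < 1 / t) :
    ∑' m : ℕ, log (log m) * exp (-t) ^ m
      ≤ (t / (1 - exp (-t)) + (t / (1 - exp (-t))) ^ 2 * exp (-t)
          * ((log (1 / t))⁻¹ * (log (log (1 / t)))⁻¹)) * (log (log (1 / t)) / t) := by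
  have hx0 := (exp_pos (-t)).le
  have hx1 : exp (-t) < 1 := exp_lt_one_iff.2 (by linarith)
  have hu : 1 < log (1 / t) := (lt_log_iff_exp_lt (by positivity)).2 hs
  have hL : 0 < log (log (1 / t)) := log_pos hu
  refine (tsum_mul_geometric_le_of_le_linear (log_log_natCast_le hs.le)
    (summable_log_log_natCast_mul_pow hx0 hx1) hx0 hx1).trans_eq ?_
  have : 0 < 1 - exp (-t) := by linarith
  field_simp

lemma le_tsum_log_log_mul_exp_neg_pow {t : ℝ} (ht : 0 < t) (hs : exp 1 < 1 / t) :
    t / (1 - exp (-t)) * ((1 + (1 - log 2) * (log (log (1 / t)))⁻¹) * exp (-t) ^ ⌈√(1 / t)⌉₊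
        - (log (log (1 / t)))⁻¹) * (log (log (1 / t)) / t)
      ≤ ∑' m : ℕ, log (log m) * exp (-t) ^ m := by
  have hx0 := (exp_pos (-t)).le
  have hx1 : exp (-t) < 1 := exp_lt_one_iff.2 (by linarith)
  have hs1 : 1 < 1 / t := (one_lt_exp_iff.2 one_pos).trans hs
  have hu : 1 < log (1 / t) := (lt_log_iff_exp_lt (by positivity)).2 hs
  have hL : 0 < log (log (1 / t)) := log_pos hu
  have htail (m : ℕ) (hm : ⌈√(1 / t)⌉₊ ≤ m) : log (log (1 / t)) - log 2 ≤ log (log m) :=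
    log_log_sub_log_two_le_log_log hs1 ((Nat.le_ceil _).trans (by exact_mod_cast hm))
  refine le_trans (le_of_eq ?_) (le_tsum_mul_geometric _ neg_one_le_log_log_natCast htail
    (summable_log_log_natCast_mul_pow hx0 hx1) hx0 hx1)
  have : 0 < 1 - exp (-t) := by linarith
  field_simp
  ring

lemma tendsto_one_div_nhdsGT_zero : Tendsto (fun t : ℝ => 1 / t) (𝓝[>] 0) atTop := by
  simpa only [one_div] using tendsto_inv_nhdsGT_zero

lemma tendsto_log_one_div_nhdsGT_zero :
    Tendsto (fun t : ℝ => log (1 / t)) (𝓝[>] 0) atTop :=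
  tendsto_log_atTop.comp tendsto_one_div_nhdsGT_zero

lemma tendsto_log_log_one_div_nhdsGT_zero :
    Tendsto (fun t : ℝ => log (log (1 / t))) (𝓝[>] 0) atTop :=
  tendsto_log_atTop.comp tendsto_log_one_div_nhdsGT_zero

lemma tendsto_div_one_sub_exp_neg_nhdsGT_zero :
    Tendsto (fun t : ℝ => t / (1 - exp (-t))) (𝓝[>] 0) (𝓝 1) := by
  have hlin : Tendsto (fun t : ℝ => 1 + t) (𝓝[>] 0) (𝓝 1) :=
    ((by fun_prop : Continuous fun t : ℝ => 1 + t).tendsto' 0 1 (by simp)).mono_left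
      nhdsWithin_le_nhds
  refine tendsto_of_tendsto_of_tendsto_of_le_of_le' tendsto_const_nhds hlin ?_ ?_ <;>
    filter_upwards [self_mem_nhdsWithin] with t (ht : 0 < t)
  all_goals have hpos : 0 < 1 - exp (-t) := sub_pos.2 (exp_lt_one_iff.2 (by linarith))
  · rw [le_div_iff₀ hpos]
    linarith [add_one_le_exp (-t)]
  · rw [div_le_iff₀ hpos]
    have hinv : exp t * exp (-t) = 1 := by rw [← exp_add, add_neg_cancel, exp_zero]
    nlinarith [add_one_le_exp t, exp_pos (-t)]

lemma tendsto_exp_neg_pow_ceil_sqrt_one_div :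
    Tendsto (fun t : ℝ => exp (-t) ^ ⌈√(1 / t)⌉₊) (𝓝[>] 0) (𝓝 1) := by
  have hbound : Tendsto (fun t : ℝ => √t + t) (𝓝[>] 0) (𝓝 0) :=
    ((by fun_prop : Continuous fun t : ℝ => √t + t).tendsto' 0 0 (by simp)).mono_left
      nhdsWithin_le_nhds
  have hmul : Tendsto (fun t : ℝ => t * ⌈√(1 / t)⌉₊) (𝓝[>] 0) (𝓝 0) := by
    refine tendsto_of_tendsto_of_tendsto_of_le_of_le' tendsto_const_nhds hbound ?_ ?_ <;>
      filter_upwards [self_mem_nhdsWithin] with t (ht : 0 < t)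
    · positivity
    · have hceil := Nat.ceil_lt_add_one (sqrt_nonneg (1 / t))
      have hsqrt : t * √(1 / t) = √t := by
        rw [sqrt_div' _ ht.le, sqrt_one, mul_one_div, div_sqrt]
      nlinarith
  have := (continuous_exp.tendsto' 0 1 exp_zero).comp (neg_zero (G := ℝ) ▸ hmul.neg)
  refine this.congr fun t => ?_
  simp [← exp_nat_mul, mul_comm]

end Real

/-- As `t → 0⁺`, one has `∑_{n≥2} (log log n) e^{-nt} ~ (log log(1/t))/t`. -/
theorem loglog_exp_sum_asymp :
    (fun t : ℝ => ∑' n : ℕ, Real.log (Real.log (n + 2)) * Real.exp (-((n : ℝ) + 2) * t))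
      ~[nhdsWithin 0 (Set.Ioi 0)]
      fun t : ℝ => Real.log (Real.log (1 / t)) / t := by
  have hsmall : ∀ᶠ t in 𝓝[>] (0 : ℝ), 0 < t ∧ exp 1 < 1 / t :=
    (eventually_mem_nhdsWithin (a := 0) (s := Set.Ioi 0)).and
      (tendsto_one_div_nhdsGT_zero.eventually_gt_atTop _)
  have hq := tendsto_div_one_sub_exp_neg_nhdsGT_zero
  have hu := tendsto_log_one_div_nhdsGT_zero.inv_tendsto_atTop
  have hL := tendsto_log_log_one_div_nhdsGT_zero.inv_tendsto_atTop
  have hx : Tendsto (fun t : ℝ => exp (-t)) (𝓝[>] 0) (𝓝 1) :=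
    ((continuous_exp.comp continuous_neg).tendsto' 0 1 (by simp)).mono_left nhdsWithin_le_nhds
  simp_rw [tsum_log_log_add_two_mul_exp]
  refine isEquivalent_of_mul_le_of_le_mul ?_ ?_ ?_
    (hsmall.mono fun t ht => le_tsum_log_log_mul_exp_neg_pow ht.1 ht.2)
    (hsmall.mono fun t ht => tsum_log_log_mul_exp_neg_pow_le ht.1 ht.2)
  · filter_upwards [hsmall, tendsto_log_log_one_div_nhdsGT_zero.eventually_gt_atTop 0]
      with t ht hLt using div_pos hLt ht.1
  · simpa using hq.mul (((tendsto_const_nhds.add (hL.const_mul (1 - log 2))).mul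
      tendsto_exp_neg_pow_ceil_sqrt_one_div).sub hL)
  · simpa using hq.add (((hq.pow 2).mul hx).mul (hu.mul hL))
end

section
/- The alternating binomial differences of the logarithm, f̂_n = Σ_{k=1}^n C(n,k) (-1)^k log k, satisfy f̂_n = log log n + O(1) as n → ∞. -/
open Filter Asymptotics Finset
open MeasureTheory Real Set intervalIntegral

/-!
Since `1 / s = ∫₀¹ t ^ (s - 1) dt`, Fubini gives `log (m + 1) = ∫₀¹ (1 - t ^ m) / (-log t) dt`,
and the binomial theorem collapses the alternating sum of these integrands into
`((1 - t) - (1 - t) ^ n) / (t · (-log t))`. This kernel is at most `n` on `[0, 1/n]`, at most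
`1 / t ≤ e` on `[1/e, 1]`, and on `[1/n, 1/e]` it differs from `1 / (t · (-log t))`, whose
integral there is exactly `log log n`, by at most `1 + n (1 - t) ^ n`, whose integral is at
most `2`.
-/

lemma integral_rpow_sub_one_zero_one {s : ℝ} (hs : 0 < s) :
    ∫ t in (0 : ℝ)..1, t ^ (s - 1) = 1 / s := by
  rw [integral_rpow (Or.inl (by linarith)), sub_add_cancel, one_rpow, zero_rpow hs.ne', sub_zero]

lemma integral_rpow_sub_one_one_add {t : ℝ} (ht : 0 < t) (ht1 : t ≠ 1) (x : ℝ) :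
    ∫ s in (1 : ℝ)..1 + x, t ^ (s - 1) = (t ^ x - 1) / log t := by
  have hlog : log t ≠ 0 := log_ne_zero_of_pos_of_ne_one ht ht1
  have hderiv (s : ℝ) : HasDerivAt (fun s => t ^ (s - 1) / log t) (t ^ (s - 1)) s := by
    simpa [hlog] using (((hasDerivAt_id s).sub_const 1).const_rpow ht).div_const (log t)
  have hcont : Continuous fun s : ℝ => t ^ (s - 1) := by fun_prop (disch := positivity)
  rw [integral_eq_sub_of_hasDerivAt (fun s _ => hderiv s) (hcont.intervalIntegrable _ _),
    add_sub_cancel_left, sub_self, rpow_zero, sub_div]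

theorem integral_one_sub_pow_div_neg_log (m : ℕ) :
    ∫ t in (0 : ℝ)..1, (1 - t ^ m) / -log t = log (m + 1) := by
  have hm : (1 : ℝ) ≤ 1 + m := by simp
  have hfubini : IntegrableOn (Function.uncurry fun s t : ℝ => t ^ (s - 1))
      (uIoc (1 : ℝ) (1 + m) ×ˢ uIoc (0 : ℝ) 1) := by
    refine IntegrableOn.of_bound ?_ ?_ 1 ?_
    · exact lt_of_le_of_lt (measure_mono (prod_mono uIoc_subset_uIcc uIoc_subset_uIcc))
        (isCompact_uIcc.prod isCompact_uIcc).measure_lt_top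
    · exact (measurable_snd.pow (measurable_fst.sub_const 1)).aestronglyMeasurable
    · refine (ae_restrict_iff' (measurableSet_uIoc.prod measurableSet_uIoc)).2 (.of_forall ?_)
      rintro ⟨s, t⟩ ⟨hs, ht⟩
      rw [uIoc_of_le hm] at hs
      rw [uIoc_of_le zero_le_one] at ht
      rw [Function.uncurry_apply_pair, norm_of_nonneg (rpow_nonneg ht.1.le _)]
      exact rpow_le_one ht.1.le ht.2 (by linarith [hs.1])
  calc ∫ t in (0 : ℝ)..1, (1 - t ^ m) / -log t
      = ∫ t in (0 : ℝ)..1, ∫ s in (1 : ℝ)..1 + m, t ^ (s - 1) := by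
        -- `t = 1` is excluded: there the left integrand is the junk value `0 / 0 = 0`.
        refine integral_congr_ae ?_
        filter_upwards [Measure.ae_ne volume 1] with t ht1 ht
        rw [uIoc_of_le zero_le_one] at ht
        rw [integral_rpow_sub_one_one_add ht.1 ht1, rpow_natCast, div_neg, ← neg_div, neg_sub]
    _ = ∫ s in (1 : ℝ)..1 + m, ∫ t in (0 : ℝ)..1, t ^ (s - 1) :=
        (intervalIntegral_intervalIntegral_swap hfubini).symm
    _ = ∫ s in (1 : ℝ)..1 + m, 1 / s := by
        refine integral_congr fun s hs => integral_rpow_sub_one_zero_one ?_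
        rw [uIcc_of_le hm] at hs
        linarith [hs.1]
    _ = log (m + 1) := by
        have h0 : (0 : ℝ) ∉ Set.uIcc 1 (1 + (m : ℝ)) := by
          rw [uIcc_of_le hm]
          exact fun h => by linarith [h.1]
        rw [integral_one_div h0, div_one, add_comm]

lemma one_sub_pow_le_mul_neg_log {t : ℝ} (ht : 0 < t) (m : ℕ) : 1 - t ^ m ≤ m * -log t := by
  have hbern := one_add_mul_sub_le_pow (by linarith : -1 ≤ t) m
  have hlog := log_le_sub_one_of_pos ht
  nlinarith [m.cast_nonneg (α := ℝ)]

lemma intervalIntegrable_one_sub_pow_div_neg_log (m : ℕ) :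
    IntervalIntegrable (fun t => (1 - t ^ m) / -log t) volume 0 1 := by
  rw [intervalIntegrable_iff_integrableOn_Ioc_of_le zero_le_one]
  refine IntegrableOn.of_bound measure_Ioc_lt_top
    (by fun_prop : Measurable fun t : ℝ => (1 - t ^ m) / -log t).aestronglyMeasurable m
    ((ae_restrict_iff' measurableSet_Ioc).2 (.of_forall fun t ht => ?_))
  have hlog : 0 ≤ -log t := neg_nonneg.2 (log_nonpos ht.1.le ht.2)
  rw [norm_of_nonneg (div_nonneg (sub_nonneg.2 (pow_le_one₀ ht.1.le ht.2)) hlog)]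
  exact div_le_of_le_mul₀ hlog m.cast_nonneg (one_sub_pow_le_mul_neg_log ht.1 m)

theorem sum_Icc_choose_mul_neg_one_pow_mul_pow {R : Type*} [CommRing R] (x : R) (n : ℕ) :
    ∑ k ∈ Finset.Icc 1 n, (n.choose k : R) * (-1) ^ k * x ^ k = (1 - x) ^ n - 1 := by
  have h := add_pow (-x) 1 n
  rw [range_eq_Ico, sum_eq_sum_Ico_succ_bot n.add_one_pos] at h
  simp only [pow_zero, one_pow, mul_one, Nat.choose_zero_right, Nat.cast_one, zero_add] at h
  rw [neg_add_eq_sub, Finset.Ico_add_one_right_eq_Icc] at h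
  rw [h, add_sub_cancel_left]
  exact sum_congr rfl fun k _ => by rw [neg_pow]; ring

theorem mul_sum_Icc_choose_mul_neg_one_pow_mul_one_sub_pow {R : Type*} [CommRing R] (x : R)
    {n : ℕ} (hn : n ≠ 0) :
    x * ∑ k ∈ Finset.Icc 1 n, (n.choose k : R) * (-1) ^ k * (1 - x ^ (k - 1)) =
      (1 - x) - (1 - x) ^ n := by
  have hterm : ∀ k ∈ Finset.Icc 1 n, x * ((n.choose k : R) * (-1) ^ k * (1 - x ^ (k - 1)))
      = (n.choose k : R) * (-1) ^ k * 1 ^ k * x - (n.choose k : R) * (-1) ^ k * x ^ k := by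
    intro k hk
    obtain ⟨j, rfl⟩ := Nat.exists_eq_add_of_le' (Finset.mem_Icc.1 hk).1
    simp only [Nat.add_sub_cancel, one_pow]
    ring
  rw [mul_sum, sum_congr rfl hterm, sum_sub_distrib, ← sum_mul,
    sum_Icc_choose_mul_neg_one_pow_mul_pow, sum_Icc_choose_mul_neg_one_pow_mul_pow, sub_self,
    zero_pow hn]
  ring

noncomputable def binomLogKernel (n : ℕ) (t : ℝ) : ℝ := ((1 - t) - (1 - t) ^ n) / (t * -log t)

lemma sum_choose_mul_one_sub_pow_div_neg_log {n : ℕ} (hn : n ≠ 0) (t : ℝ) :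
    ∑ k ∈ Finset.Icc 1 n, (n.choose k : ℝ) * (-1) ^ k * ((1 - t ^ (k - 1)) / -log t) =
      binomLogKernel n t := by
  rcases eq_or_ne t 0 with rfl | ht
  · simp [binomLogKernel]
  simp_rw [← mul_div_assoc]
  rw [binomLogKernel, ← sum_div, ← mul_sum_Icc_choose_mul_neg_one_pow_mul_one_sub_pow t hn,
    mul_div_mul_left _ _ ht]

theorem sum_choose_mul_log_eq_integral {n : ℕ} (hn : n ≠ 0) :
    ∑ k ∈ Finset.Icc 1 n, (n.choose k : ℝ) * (-1) ^ k * log k =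
      ∫ t in (0 : ℝ)..1, binomLogKernel n t := by
  have hterm : ∀ k ∈ Finset.Icc 1 n, (n.choose k : ℝ) * (-1) ^ k * log k =
      ∫ t in (0 : ℝ)..1, (n.choose k : ℝ) * (-1) ^ k * ((1 - t ^ (k - 1)) / -log t) := by
    intro k hk
    obtain ⟨j, rfl⟩ := Nat.exists_eq_add_of_le' (Finset.mem_Icc.1 hk).1
    rw [intervalIntegral.integral_const_mul, Nat.add_sub_cancel, integral_one_sub_pow_div_neg_log,
      Nat.cast_succ]
  rw [sum_congr rfl hterm, ← integral_finsetSum fun k _ =>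
    (intervalIntegrable_one_sub_pow_div_neg_log (k - 1)).const_mul _]
  simp_rw [sum_choose_mul_one_sub_pow_div_neg_log hn]

lemma binomLogKernel_nonneg {n : ℕ} (hn : n ≠ 0) {t : ℝ} (ht0 : 0 ≤ t) (ht1 : t ≤ 1) :
    0 ≤ binomLogKernel n t :=
  div_nonneg (sub_nonneg.2 (pow_le_of_le_one (by linarith) (by linarith) hn))
    (mul_nonneg ht0 (neg_nonneg.2 (log_nonpos ht0 ht1)))

lemma binomLogKernel_le_natCast (n : ℕ) {t : ℝ} (ht0 : 0 < t) (ht1 : t ≤ 1) :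
    binomLogKernel n t ≤ n := by
  have hlog := log_le_sub_one_of_pos ht0
  refine div_le_of_le_mul₀ (mul_nonneg ht0.le (neg_nonneg.2 (log_nonpos ht0.le ht1)))
    n.cast_nonneg ?_
  rcases n with _ | m
  · simp only [pow_zero, Nat.cast_zero, zero_mul]
    linarith
  have hbern := one_add_mul_sub_le_pow (by linarith : -1 ≤ 1 - t) m
  have hpow : (1 - t) ^ m ≤ 1 := pow_le_one₀ (by linarith) (by linarith)
  calc 1 - t - (1 - t) ^ (m + 1) = (1 - t) * (1 - (1 - t) ^ m) := by ring
    _ ≤ -log t * (m * t) := mul_le_mul (by linarith) (by linarith) (by linarith) (by linarith)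
    _ ≤ (m + 1 : ℕ) * (t * -log t) := by push_cast; nlinarith

lemma binomLogKernel_le_inv (n : ℕ) {t : ℝ} (ht0 : 0 < t) (ht1 : t ≤ 1) :
    binomLogKernel n t ≤ t⁻¹ := by
  have hlog := log_le_sub_one_of_pos ht0
  refine div_le_of_le_mul₀ (mul_nonneg ht0.le (neg_nonneg.2 (log_nonpos ht0.le ht1)))
    (inv_nonneg.2 ht0.le) ?_
  rw [← mul_assoc, inv_mul_cancel₀ ht0.ne', one_mul]
  have := pow_nonneg (sub_nonneg.2 ht1) n
  linarith

lemma intervalIntegrable_binomLogKernel {n : ℕ} (hn : n ≠ 0) {a b : ℝ} (ha : a ∈ Icc (0 : ℝ) 1)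
    (hb : b ∈ Icc (0 : ℝ) 1) : IntervalIntegrable (binomLogKernel n) volume a b := by
  refine IntervalIntegrable.mono_set ?_
    (uIcc_subset_uIcc (by rwa [Set.uIcc_of_le zero_le_one]) (by rwa [Set.uIcc_of_le zero_le_one]))
  rw [intervalIntegrable_iff_integrableOn_Ioc_of_le zero_le_one]
  refine IntegrableOn.of_bound measure_Ioc_lt_top
    (by unfold binomLogKernel; fun_prop : Measurable (binomLogKernel n)).aestronglyMeasurable n
    ((ae_restrict_iff' measurableSet_Ioc).2 (.of_forall fun t ht => ?_))
  rw [norm_of_nonneg (binomLogKernel_nonneg hn ht.1.le ht.2)]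
  exact binomLogKernel_le_natCast n ht.1 ht.2

lemma continuousOn_inv_mul_neg_log : ContinuousOn (fun t => (t * -log t)⁻¹) (Ioo 0 1) :=
  (continuousOn_id.mul (continuousOn_log.mono fun _ ht => ht.1.ne').neg).inv₀
    fun _ ht => (mul_pos ht.1 (neg_pos.2 (log_neg ht.1 ht.2))).ne'

lemma integral_inv_mul_neg_log {a b : ℝ} (ha : 0 < a) (hab : a ≤ b) (hb : b < 1) :
    ∫ t in a..b, (t * -log t)⁻¹ = log (-log a) - log (-log b) := by
  have hsub : uIcc a b ⊆ Ioo 0 1 := by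
    rw [uIcc_of_le hab]
    exact fun t ht => ⟨ha.trans_le ht.1, ht.2.trans_lt hb⟩
  have hderiv {t : ℝ} (ht : t ∈ uIcc a b) :
      HasDerivAt (fun t => -log (-log t)) (t * -log t)⁻¹ t := by
    have ht0 : t ≠ 0 := (hsub ht).1.ne'
    have hlog : -log t ≠ 0 := (neg_pos.2 (log_neg (hsub ht).1 (hsub ht).2)).ne'
    have hneglog : HasDerivAt (fun t => -log t) (-t⁻¹) t := (hasDerivAt_log ht0).neg
    refine (hneglog.log hlog).neg.congr_deriv ?_
    field_simp
  rw [integral_eq_sub_of_hasDerivAt (fun t ht => hderiv ht)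
    (continuousOn_inv_mul_neg_log.mono hsub).intervalIntegrable]
  ring

lemma abs_inv_mul_neg_log_sub_binomLogKernel_le {n : ℕ} {t : ℝ} (hnt : 1 ≤ n * t)
    (ht : log t ≤ -1) : |(t * -log t)⁻¹ - binomLogKernel n t| ≤ 1 + n * (1 - t) ^ n := by
  have ht0 : 0 < t := by
    by_contra! h
    nlinarith [n.cast_nonneg (α := ℝ)]
  have ht1 : t < 1 := (log_neg_iff ht0).1 (by linarith)
  have hpow : 0 ≤ (1 - t) ^ n := pow_nonneg (by linarith) n
  have hden : 0 < t * -log t := mul_pos ht0 (by linarith)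
  rw [binomLogKernel, inv_eq_one_div, div_sub_div_same,
    abs_of_nonneg (div_nonneg (by linarith) hden.le), div_le_iff₀ hden]
  nlinarith [mul_le_mul_of_nonneg_left hnt (mul_nonneg hpow (by linarith : (0 : ℝ) ≤ -log t))]

lemma integral_one_add_mul_one_sub_pow_le {a b : ℝ} (ha : 0 ≤ a) (hab : a ≤ b) (hb : b ≤ 1)
    (n : ℕ) : ∫ t in a..b, (1 + n * (1 - t) ^ n) ≤ 2 := by
  have hcont : Continuous fun t : ℝ => n * (1 - t) ^ n := by fun_prop
  rw [intervalIntegral.integral_add intervalIntegrable_const (hcont.intervalIntegrable a b),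
    intervalIntegral.integral_const, intervalIntegral.integral_const_mul,
    integral_comp_sub_left (fun t => t ^ n), integral_pow, smul_eq_mul, mul_one]
  have h1 : (1 - a) ^ (n + 1) ≤ 1 := pow_le_one₀ (by linarith) (by linarith)
  have h2 : 0 ≤ (1 - b) ^ (n + 1) := pow_nonneg (by linarith) _
  have h3 : (n : ℝ) * (((1 - a) ^ (n + 1) - (1 - b) ^ (n + 1)) / (n + 1)) ≤ 1 := by
    rw [mul_div_assoc', div_le_one (by positivity)]
    nlinarith [n.cast_nonneg (α := ℝ)]
  linarith

lemma abs_integral_binomLogKernel_zero_inv_le {n : ℕ} (hn : n ≠ 0) :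
    |∫ t in (0 : ℝ)..(n : ℝ)⁻¹, binomLogKernel n t| ≤ 1 := by
  have hn1 : (n : ℝ)⁻¹ ≤ 1 :=
    inv_le_one_of_one_le₀ (by exact_mod_cast Nat.one_le_iff_ne_zero.2 hn)
  have hbound : ∀ t ∈ uIoc (0 : ℝ) (n : ℝ)⁻¹, ‖binomLogKernel n t‖ ≤ n := by
    intro t ht
    rw [uIoc_of_le (by positivity)] at ht
    rw [norm_of_nonneg (binomLogKernel_nonneg hn ht.1.le (ht.2.trans hn1))]
    exact binomLogKernel_le_natCast n ht.1 (ht.2.trans hn1)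
  have := norm_integral_le_of_norm_le_const hbound
  rwa [sub_zero, abs_of_nonneg (by positivity), mul_inv_cancel₀ (by exact_mod_cast hn)] at this

lemma abs_integral_binomLogKernel_exp_neg_one_one_le {n : ℕ} (hn : n ≠ 0) :
    |∫ t in exp (-1)..1, binomLogKernel n t| ≤ exp 1 := by
  have he : exp (-1) ≤ 1 := exp_le_one_iff.2 (by norm_num)
  have hbound : ∀ t ∈ uIoc (exp (-1)) 1, ‖binomLogKernel n t‖ ≤ exp 1 := by
    intro t ht
    rw [uIoc_of_le he] at ht
    have ht0 : 0 < t := (exp_pos _).trans ht.1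
    rw [norm_of_nonneg (binomLogKernel_nonneg hn ht0.le ht.2)]
    calc binomLogKernel n t ≤ t⁻¹ := binomLogKernel_le_inv n ht0 ht.2
      _ ≤ (exp (-1))⁻¹ := inv_anti₀ (exp_pos _) ht.1.le
      _ = exp 1 := by rw [exp_neg, inv_inv]
  have := norm_integral_le_of_norm_le_const hbound
  rw [abs_of_nonneg (sub_nonneg.2 he)] at this
  refine this.trans (mul_le_of_le_one_right (exp_pos _).le ?_)
  linarith [exp_pos (-1)]

lemma inv_natCast_le_exp_neg_one {n : ℕ} (hn : 3 ≤ n) : (n : ℝ)⁻¹ ≤ exp (-1) := by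
  rw [exp_neg]
  refine inv_anti₀ (exp_pos 1) ?_
  have : (3 : ℝ) ≤ n := by exact_mod_cast hn
  linarith [exp_one_lt_d9]

lemma abs_integral_binomLogKernel_sub_log_log_le {n : ℕ} (hn : 3 ≤ n) :
    |(∫ t in (n : ℝ)⁻¹..exp (-1), binomLogKernel n t) - log (log n)| ≤ 2 := by
  have hn0 : (0 : ℝ) < n := by positivity
  have hab := inv_natCast_le_exp_neg_one hn
  have he : exp (-1) < 1 := exp_lt_one_iff.2 (by norm_num)
  have hsub : uIcc (n : ℝ)⁻¹ (exp (-1)) ⊆ Ioo 0 1 := by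
    rw [uIcc_of_le hab]
    exact fun t ht => ⟨(inv_pos.2 hn0).trans_le ht.1, ht.2.trans_lt he⟩
  have hkernel : IntervalIntegrable (binomLogKernel n) volume (n : ℝ)⁻¹ (exp (-1)) :=
    intervalIntegrable_binomLogKernel (by omega) ⟨by positivity, hab.trans he.le⟩
      ⟨by positivity, he.le⟩
  have hloglog : ∫ t in (n : ℝ)⁻¹..exp (-1), (t * -log t)⁻¹ = log (log n) := by
    rw [integral_inv_mul_neg_log (by positivity) hab he, log_exp, log_inv, neg_neg, neg_neg,
      log_one, sub_zero]
  have hmajorant : ∀ t ∈ Ioc (n : ℝ)⁻¹ (exp (-1)),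
      ‖(t * -log t)⁻¹ - binomLogKernel n t‖ ≤ 1 + n * (1 - t) ^ n := fun t ht =>
    abs_inv_mul_neg_log_sub_binomLogKernel_le ((inv_le_iff_one_le_mul₀' hn0).1 ht.1.le)
      ((log_le_iff_le_exp ((inv_pos.2 hn0).trans ht.1)).2 ht.2)
  calc |(∫ t in (n : ℝ)⁻¹..exp (-1), binomLogKernel n t) - log (log n)|
      = ‖∫ t in (n : ℝ)⁻¹..exp (-1), ((t * -log t)⁻¹ - binomLogKernel n t)‖ := by
        rw [intervalIntegral.integral_sub
          (continuousOn_inv_mul_neg_log.mono hsub).intervalIntegrable hkernel, hloglog,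
          norm_eq_abs, abs_sub_comm]
    _ ≤ ∫ t in (n : ℝ)⁻¹..exp (-1), (1 + n * (1 - t) ^ n) :=
        intervalIntegral.norm_integral_le_of_norm_le hab (.of_forall hmajorant)
          ((by fun_prop : Continuous fun t : ℝ => 1 + n * (1 - t) ^ n).intervalIntegrable _ _)
    _ ≤ 2 := integral_one_add_mul_one_sub_pow_le (by positivity) hab he.le n

theorem abs_sum_choose_mul_log_sub_log_log_le {n : ℕ} (hn : 3 ≤ n) :
    |∑ k ∈ Finset.Icc 1 n, (n.choose k : ℝ) * (-1) ^ k * log k - log (log n)| ≤ 3 + exp 1 := by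
  have hn0 : n ≠ 0 := by omega
  have hab := inv_natCast_le_exp_neg_one hn
  have he : exp (-1) ≤ 1 := exp_le_one_iff.2 (by norm_num)
  have ha : (n : ℝ)⁻¹ ∈ Icc (0 : ℝ) 1 := ⟨by positivity, hab.trans he⟩
  have hb : exp (-1) ∈ Icc (0 : ℝ) 1 := ⟨(exp_pos _).le, he⟩
  have h0 : (0 : ℝ) ∈ Icc (0 : ℝ) 1 := ⟨le_rfl, zero_le_one⟩
  rw [sum_choose_mul_log_eq_integral hn0,
    ← integral_add_adjacent_intervals (intervalIntegrable_binomLogKernel hn0 h0 hb)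
      (intervalIntegrable_binomLogKernel hn0 hb ⟨zero_le_one, le_rfl⟩),
    ← integral_add_adjacent_intervals (intervalIntegrable_binomLogKernel hn0 h0 ha)
      (intervalIntegrable_binomLogKernel hn0 ha hb)]
  have h1 := abs_integral_binomLogKernel_zero_inv_le hn0
  have h2 := abs_integral_binomLogKernel_sub_log_log_le hn
  have h3 := abs_integral_binomLogKernel_exp_neg_one_one_le hn0
  calc _ = |(∫ t in (0 : ℝ)..(n : ℝ)⁻¹, binomLogKernel n t)
          + ((∫ t in (n : ℝ)⁻¹..exp (-1), binomLogKernel n t) - log (log n))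
          + ∫ t in exp (-1)..1, binomLogKernel n t| := by congr 1; ring
    _ ≤ _ := (abs_add_three _ _ _).trans (by linarith)

/-- The alternating binomial differences of the logarithm satisfy
`∑_{k=1}^n C(n,k)(-1)^k log k = log log n + O(1)`. -/
theorem binomial_differences_log :
    (fun n : ℕ => (∑ k ∈ Finset.Icc 1 n, (n.choose k : ℝ) * (-1) ^ k * Real.log k)
        - Real.log (Real.log n)) =O[atTop] fun _ : ℕ => (1 : ℝ) := by
  refine isBigO_iff.2 ⟨3 + exp 1, ?_⟩
  filter_upwards [eventually_ge_atTop 3] with n hn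
  rw [norm_one, mul_one, norm_eq_abs]
  exact abs_sum_choose_mul_log_sub_log_log_le hn
end

section
/- The sequence f_n = log n (with f_0 = 0) is not holonomic: there is no nontrivial linear recurrence with polynomial coefficients p_0(n) f_{n+d} + ... + p_d(n) f_n = 0 valid for all n ≥ 0 with p_0 not identically zero. -/
open Finset

/-!
Put `z = 1 / n` and `P k = reflect D (r k)`, where `r k` is the coefficient of `log (n + k)` and
`D` bounds the degrees, so that `r k n = n ^ D * P k z`. Since `log (n + k) = - log z + log (1 + k z)`, the recurrence becomes `log z • A z = B z` with
`A = ∑ P k` a polynomial and `B z = ∑ P k (z) log (1 + k z)` analytic at `0`. As `log` is not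
meromorphic at `0`, comparing orders of vanishing forces `A = 0`; then `B` vanishes at every
`1 / n`, hence on `(-1 / d, ∞)` by the identity theorem. At `-1 / d` only the top term is singular,
`log (1 + d z) = log d + log (z + 1 / d)`, and the same comparison of orders gives `P d = 0`.
-/

open Filter Topology Polynomial Set

section LogSmul

variable {E : Type*} [NormedAddCommGroup E] [NormedSpace ℝ E] {l : Filter ℝ} [l.NeBot]
  {g h : ℝ → E}

theorem not_eventually_log_smul_eq (hl : l ≤ 𝓝[>] 0) (hg : ContinuousAt g 0) (hg0 : g 0 ≠ 0)
    (hh : ContinuousAt h 0) : ¬ ∀ᶠ t in l, Real.log t • g t = h t := by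
  intro hgh
  have hl' : l ≤ 𝓝 0 := hl.trans nhdsWithin_le_nhds
  have hlog : Tendsto (fun t => |Real.log t|) l atTop :=
    (tendsto_abs_atBot_atTop.comp Real.tendsto_log_nhdsGT_zero).mono_left hl
  have hnorm : Tendsto (fun t => ‖Real.log t • g t‖) l atTop := by
    simp only [norm_smul, Real.norm_eq_abs]
    exact hlog.atTop_mul_pos (norm_pos_iff.mpr hg0) (hg.norm.tendsto.mono_left hl')
  exact not_tendsto_atTop_of_tendsto_nhds (hh.norm.tendsto.mono_left hl')
    (hnorm.congr' (hgh.mono fun t ht => by rw [ht]))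

theorem not_eventually_pow_mul_log_smul_eq (hl : l ≤ 𝓝[>] 0) {j : ℕ} (hj : 0 < j)
    (hg : ContinuousAt g 0) (hh : ContinuousAt h 0) (hh0 : h 0 ≠ 0) :
    ¬ ∀ᶠ t in l, (t ^ j * Real.log t) • g t = h t := by
  intro hgh
  have hl' : l ≤ 𝓝 0 := hl.trans nhdsWithin_le_nhds
  have hpow : Tendsto (fun t : ℝ => t ^ j * Real.log t) l (𝓝 0) :=
    ((tendsto_log_mul_rpow_nhdsGT_zero (Nat.cast_pos.mpr hj)).mono_left hl).congr fun t => by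
      rw [Real.rpow_natCast, mul_comm]
  have hlim : Tendsto (fun t => (t ^ j * Real.log t) • g t) l (𝓝 0) := by
    simpa using hpow.smul (hg.tendsto.mono_left hl')
  exact hh0 (tendsto_nhds_unique (hh.tendsto.mono_left hl') (hlim.congr' hgh))

/-- Write `g = t ^ k • g₁` with `g₁ 0 ≠ 0`. If `h` vanishes to order at least `k`, cancelling
`t ^ k` leaves `log t • g₁ t` bounded; if `h = t ^ m • h₁` with `m < k` and `h₁ 0 ≠ 0`, cancelling
`t ^ m` leaves `h₁ t` equal to `(t ^ (k - m) * log t) • g₁ t → 0`. -/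
theorem AnalyticAt.eventually_eq_zero_of_log_smul_eq (hg : AnalyticAt ℝ g 0)
    (hh : AnalyticAt ℝ h 0) (hl : l ≤ 𝓝[>] 0) (hgh : ∀ᶠ t in l, Real.log t • g t = h t) :
    ∀ᶠ t in 𝓝 0, g t = 0 := by
  rw [← analyticOrderAt_eq_top]
  by_contra hg_top
  have hl' : l ≤ 𝓝 0 := hl.trans nhdsWithin_le_nhds
  have hpos : ∀ᶠ t in l, 0 < t := hl self_mem_nhdsWithin
  obtain ⟨k, hk⟩ := ENat.ne_top_iff_exists.mp hg_top
  obtain ⟨g₁, hg₁, hg₁0, hgk⟩ := hg.analyticOrderAt_eq_natCast.mp hk.symm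
  rcases le_or_gt (k : ℕ∞) (analyticOrderAt h 0) with hhk | hhk
  · obtain ⟨h₁, hh₁, hhk⟩ := (natCast_le_analyticOrderAt hh).mp hhk
    refine not_eventually_log_smul_eq hl hg₁.continuousAt hg₁0 hh₁.continuousAt ?_
    filter_upwards [hgh, hl' hgk, hl' hhk, hpos] with t ht hgt hht htpos
    rw [hgt, hht, sub_zero, smul_comm] at ht
    exact smul_right_injective E (pow_ne_zero k htpos.ne') ht
  · obtain ⟨m, hm⟩ := ENat.ne_top_iff_exists.mp hhk.ne_top
    obtain ⟨h₁, hh₁, hh₁0, hhm⟩ := hh.analyticOrderAt_eq_natCast.mp hm.symm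
    have hmk : m < k := by exact_mod_cast hm ▸ hhk
    refine not_eventually_pow_mul_log_smul_eq hl (Nat.sub_pos_of_lt hmk) hg₁.continuousAt
      hh₁.continuousAt hh₁0 ?_
    filter_upwards [hgh, hl' hgk, hl' hhm, hpos] with t ht hgt hht htpos
    rw [hgt, hht, sub_zero, ← Nat.add_sub_cancel' hmk.le, pow_add, smul_comm, mul_smul] at ht
    rw [mul_smul]
    exact smul_right_injective E (pow_ne_zero m htpos.ne') ht

end LogSmul

theorem AnalyticAt.ofReal {f : ℝ → ℝ} {x : ℝ} (hf : AnalyticAt ℝ f x) :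
    AnalyticAt ℝ (fun t => (f t : ℂ)) x :=
  (Complex.ofRealCLM.analyticAt _).comp hf

theorem AnalyticAt.eval_polynomial {𝕜 E A : Type*} [NontriviallyNormedField 𝕜]
    [NormedAddCommGroup E] [NormedSpace 𝕜 E] [NormedCommRing A] [NormedAlgebra 𝕜 A]
    {f : E → A} {x : E} (hf : AnalyticAt 𝕜 f x) (p : A[X]) :
    AnalyticAt 𝕜 (fun t => p.eval (f t)) x := by
  simpa only [coe_aeval_eq_eval] using hf.aeval_polynomial p

theorem Polynomial.eval_reflect_inv_mul_pow {K : Type*} [Field K] {N : ℕ} {f : K[X]}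
    (hf : f.natDegree ≤ N) {x : K} (hx : x ≠ 0) : (reflect N f).eval x⁻¹ * x ^ N = f.eval x := by
  let := invertibleOfNonzero hx
  simpa [invOf_eq_inv] using eval₂_reflect_mul_pow (RingHom.id K) x N f hf

theorem Polynomial.eq_zero_of_eventually_eval_ofReal_eq_zero {P : ℂ[X]} {x : ℝ}
    (h : ∀ᶠ t : ℝ in 𝓝 x, P.eval (t : ℂ) = 0) : P = 0 := by
  refine eq_zero_of_infinite_isRoot P ?_
  refine ((infinite_of_mem_nhds x h).image Complex.ofReal_injective.injOn).mono ?_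
  rintro _ ⟨t, ht, rfl⟩
  exact ht

noncomputable def polyLogSum (P : ℕ → ℂ[X]) (m : ℕ) (z : ℝ) : ℂ :=
  ∑ k ∈ range m, (P k).eval (z : ℂ) * Real.log (1 + k * z)

theorem analyticAt_polyLogSum (P : ℕ → ℂ[X]) {m : ℕ} {z : ℝ}
    (hz : ∀ k < m, 0 < 1 + k * z) : AnalyticAt ℝ (polyLogSum P m) z := by
  unfold polyLogSum
  refine Finset.analyticAt_fun_sum _ fun k hk => ?_
  have hlog : AnalyticAt ℝ (fun t : ℝ => Real.log (1 + k * t)) z :=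
    (by fun_prop : AnalyticAt ℝ (fun t : ℝ => 1 + k * t) z).log (hz k (mem_range.mp hk))
  exact (analyticAt_id.ofReal.eval_polynomial (P k)).mul hlog.ofReal

theorem one_add_mul_pos_of_le {k d : ℕ} {z : ℝ} (hk : k ≤ d) (hz : -1 < d * z) :
    0 < 1 + k * z := by
  rcases le_or_gt 0 z with h | h
  · positivity
  · nlinarith [(Nat.cast_le (α := ℝ)).mpr hk]

theorem polyLogSum_eqOn_zero {P : ℕ → ℂ[X]} {d : ℕ} (hd : 0 < d)
    (h : ∃ᶠ z in 𝓝[≠] 0, polyLogSum P (d + 1) z = 0) :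
    EqOn (polyLogSum P (d + 1)) 0 (Ioi (-(d : ℝ)⁻¹)) := by
  have hd' : (0 : ℝ) < d := Nat.cast_pos.mpr hd
  refine AnalyticOnNhd.eqOn_zero_of_preconnected_of_frequently_eq_zero (fun z hz =>
      analyticAt_polyLogSum P fun k hk => one_add_mul_pos_of_le (Nat.lt_succ_iff.mp hk) ?_)
    isPreconnected_Ioi (by simpa using hd') h
  have := mul_lt_mul_of_pos_left (mem_Ioi.mp hz) hd'
  rwa [mul_neg, mul_inv_cancel₀ hd'.ne'] at this

theorem eq_zero_of_polyLogSum_eqOn_zero {P : ℕ → ℂ[X]} {d : ℕ} (hd : 0 < d)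
    (h : EqOn (polyLogSum P (d + 1)) 0 (Ioi (-(d : ℝ)⁻¹))) : P d = 0 := by
  have hd' : (0 : ℝ) < d := Nat.cast_pos.mpr hd
  set c : ℝ := -(d : ℝ)⁻¹
  have hshift : AnalyticAt ℝ (fun t : ℝ => c + t) 0 := by fun_prop
  have hPd : AnalyticAt ℝ (fun t => (P d).eval ((c + t : ℝ) : ℂ)) 0 :=
    hshift.ofReal.eval_polynomial (P d)
  -- the terms `k < d` of the sum stay analytic at `c`, since `1 + k * c = 1 - k / d > 0`
  have hrest : AnalyticAt ℝ (fun t => polyLogSum P d (c + t)) 0 := by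
    refine (analyticAt_polyLogSum P fun k hk => ?_).comp_of_eq hshift (add_zero c)
    rw [mul_neg, ← div_eq_mul_inv, ← sub_eq_add_neg, sub_pos, div_lt_one hd']
    exact_mod_cast hk
  have hrel : ∀ᶠ t in 𝓝[>] 0, Real.log t • (P d).eval ((c + t : ℝ) : ℂ) =
      -((P d).eval ((c + t : ℝ) : ℂ) * Real.log d + polyLogSum P d (c + t)) := by
    filter_upwards [self_mem_nhdsWithin] with t (ht : 0 < t)
    have hdt : 1 + (d : ℝ) * (c + t) = d * t := by
      rw [mul_add, show (d : ℝ) * c = -1 by simp [c, hd'.ne']]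
      ring
    have hzero : polyLogSum P (d + 1) (c + t) = 0 := h (by simpa [c] using ht)
    rw [polyLogSum, sum_range_succ, ← polyLogSum, hdt, Real.log_mul hd'.ne' ht.ne'] at hzero
    rw [Complex.real_smul]
    push_cast at hzero ⊢
    linear_combination hzero
  have hvanish := hPd.eventually_eq_zero_of_log_smul_eq
    ((hPd.mul analyticAt_const).add hrest).neg le_rfl hrel
  refine eq_zero_of_eventually_eval_ofReal_eq_zero (x := c) ?_
  exact (((continuous_sub_right c).tendsto' c 0 (sub_self c)).eventually hvanish).mono
    fun s hs => by rwa [add_sub_cancel] at hs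

theorem log_inv_smul_eval_sum_reflect {r : ℕ → ℂ[X]} {d D : ℕ}
    (hD : ∀ k ∈ range (d + 1), (r k).natDegree ≤ D) {n : ℕ} (hn : 0 < n)
    (h : ∑ k ∈ range (d + 1), (r k).eval (n : ℂ) * Real.log (n + k) = 0) :
    Real.log (n : ℝ)⁻¹ • (∑ k ∈ range (d + 1), reflect D (r k)).eval (((n : ℝ)⁻¹ : ℝ) : ℂ) =
      polyLogSum (fun k => reflect D (r k)) (d + 1) (n : ℝ)⁻¹ := by
  have hn' : (0 : ℝ) < n := Nat.cast_pos.mpr hn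
  have hlog (k : ℕ) : Real.log (n + k) = Real.log n + Real.log (1 + k * (n : ℝ)⁻¹) := by
    rw [← Real.log_mul hn'.ne' (by positivity)]
    congr 1
    field_simp
  have heval : ∀ k ∈ range (d + 1), (r k).eval (n : ℂ) =
      (reflect D (r k)).eval (((n : ℝ)⁻¹ : ℝ) : ℂ) * (n : ℂ) ^ D := by
    intro k hk
    push_cast
    exact (eval_reflect_inv_mul_pow (hD k hk) (by exact_mod_cast hn'.ne')).symm
  have key : (n : ℂ) ^ D * ((∑ k ∈ range (d + 1), reflect D (r k)).eval (((n : ℝ)⁻¹ : ℝ) : ℂ) *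
      Real.log n + polyLogSum (fun k => reflect D (r k)) (d + 1) (n : ℝ)⁻¹) = 0 := by
    rw [← h, polyLogSum, eval_finsetSum, sum_mul, ← sum_add_distrib, mul_sum]
    refine sum_congr rfl fun k hk => ?_
    rw [heval k hk, hlog k]
    push_cast
    ring
  have hnD : (n : ℂ) ^ D ≠ 0 := pow_ne_zero _ (by exact_mod_cast hn'.ne')
  rw [Real.log_inv, Complex.real_smul, Complex.ofReal_neg]
  linear_combination -(mul_eq_zero.mp key).resolve_left hnD

theorem eq_zero_of_sum_eval_mul_log_add_eq_zero {r : ℕ → ℂ[X]} {d : ℕ}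
    (h : ∀ n : ℕ, 0 < n → ∑ k ∈ range (d + 1), (r k).eval (n : ℂ) * Real.log (n + k) = 0) :
    r d = 0 := by
  set D := (range (d + 1)).sup fun k => (r k).natDegree
  set P : ℕ → ℂ[X] := fun k => reflect D (r k)
  set A := ∑ k ∈ range (d + 1), P k
  set l := map (fun n : ℕ => (n : ℝ)⁻¹) atTop
  have hl : l ≤ 𝓝[>] 0 := tendsto_inv_atTop_nhdsGT_zero.comp tendsto_natCast_atTop_atTop
  have hrel : ∀ᶠ z in l, Real.log z • A.eval (z : ℂ) = polyLogSum P (d + 1) z :=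
    eventually_map.mpr <| (eventually_gt_atTop 0).mono fun n hn =>
      log_inv_smul_eval_sum_reflect (fun k hk => le_sup (f := fun k => (r k).natDegree) hk) hn
        (h n hn)
  have hA : ∀ᶠ z : ℝ in 𝓝 0, A.eval (z : ℂ) = 0 :=
    AnalyticAt.eventually_eq_zero_of_log_smul_eq (analyticAt_id.ofReal.eval_polynomial A)
      (analyticAt_polyLogSum P fun k _ => by simp) hl hrel
  suffices P d = 0 from reflect_eq_zero_iff.mp this
  rcases Nat.eq_zero_or_pos d with rfl | hd
  · exact eq_zero_of_eventually_eval_ofReal_eq_zero (by simpa [A] using hA)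
  · have hB : ∃ᶠ z in 𝓝[≠] 0, polyLogSum P (d + 1) z = 0 := by
      refine Frequently.filter_mono (Eventually.frequently ?_) (hl.trans (nhdsGT_le_nhdsNE 0))
      filter_upwards [hrel, hl.trans nhdsWithin_le_nhds hA] with z hz hAz
      rw [← hz, hAz, smul_zero]
    exact eq_zero_of_polyLogSum_eqOn_zero hd (polyLogSum_eqOn_zero hd hB)

/-- The sequence `log n` (with `log 0 = 0`) is not holonomic. -/
theorem log_not_holonomic :
    ¬ HolonomicSeq (fun n : ℕ => (Real.log n : ℂ)) := by
  rintro ⟨d, p, hp0, hrec⟩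
  have hrel (n : ℕ) (_ : 0 < n) :
      ∑ k ∈ range (d + 1), (p (d - k)).eval (n : ℂ) * Real.log (n + k) = 0 := by
    rw [← hrec n, ← sum_range_reflect]
    refine sum_congr rfl fun k hk => ?_
    have hk : k ≤ d := Nat.lt_succ_iff.mp (mem_range.mp hk)
    simp [Nat.sub_sub_self hk]
  exact hp0 (by simpa using eq_zero_of_sum_eval_mul_log_add_eq_zero hrel)
end

section
/- For α ∈ ℂ, the sequence h_n = n^α (with h_0 = 0) is holonomic if and only if α ∈ ℤ. -/
open Finset

/-!
For an integer `α = a - b` the sequence satisfies the first-order recurrence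
`n^(a+1) (n+1)^b h(n+1) = n^(b+1) (n+1)^a h(n)`.

Conversely, given a recurrence `∑ⱼ pⱼ(n) h(n+d-j) = 0` with `deg pⱼ ≤ D`, let `q_c` be the
reversal `t^D p_{d-c}(1/t)` and `F(t) = ∑_{c ≤ d} q_c(t) (1 + c t)^α`; then
`F(1/n) = n^(-D-α) ∑ⱼ pⱼ(n) h(n+d-j) = 0` for every `n ≥ 1`. `F` is analytic on the connected
domain where every `1 + c t` avoids the branch cut, so by the identity theorem it vanishes there,
in particular off the real axis.
At a real `s` slightly left of `-1/d`, only the term `(1 + d t)^α` is discontinuous, and its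
boundary values from above and below differ by the factor `e^(2πiα) ≠ 1`; hence `q_d(s) = 0` on
an interval, so `q_d`, the reversal of `p 0`, vanishes.
-/

open Polynomial Complex Filter Topology
open scoped Real

theorem HolonomicSeq.of_first_order {f : ℕ → ℂ} {P : ℂ[X]} (hP : P ≠ 0) (Q : ℂ[X])
    (h : ∀ n : ℕ, P.eval (n : ℂ) * f (n + 1) = Q.eval (n : ℂ) * f n) : HolonomicSeq f :=
  ⟨1, fun j => if j = 0 then P else -Q, hP, fun n => by simp [sum_range_succ, h]⟩

lemma Polynomial.eval_inv_reflect_mul_pow {K : Type*} [Field K] {x : K} (hx : x ≠ 0) {N : ℕ}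
    {f : K[X]} (hf : f.natDegree ≤ N) : (reflect N f).eval x⁻¹ * x ^ N = f.eval x := by
  let := invertibleOfNonzero hx
  rw [← invOf_eq_inv]
  exact eval₂_reflect_mul_pow (RingHom.id K) x N f hf

lemma Complex.exp_int_mul_log_natCast (m : ℤ) {n : ℕ} (hn : n ≠ 0) :
    exp (m * Real.log n) = (n : ℂ) ^ m := by
  rw [exp_int_mul, ← ofReal_exp, Real.exp_log (by positivity), ofReal_natCast]

lemma Complex.log_one_add_mul_inv_add_log {x y : ℝ} (hx : 0 < x) (hy : 0 ≤ y) :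
    log (1 + y * (x : ℂ)⁻¹) + Real.log x = Real.log (x + y) := by
  have hxy : (1 + y * (x : ℂ)⁻¹) = ((1 + y / x : ℝ) : ℂ) := by push_cast; ring
  rw [hxy, ← ofReal_log (by positivity), ← ofReal_add, ← Real.log_mul (by positivity) hx.ne']
  congr 2
  field_simp

lemma Complex.exp_mul_add_pi_mul_I_ne {α : ℂ} (hα : ∀ m : ℤ, α ≠ m) (x : ℂ) :
    exp (α * (x + π * I)) ≠ exp (α * (x - π * I)) := by
  rw [Ne, exp_eq_exp_iff_exists_int]
  rintro ⟨m, hm⟩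
  apply hα m
  have hπ : (2 * π * I : ℂ) ≠ 0 := by simp
  apply mul_right_cancel₀ hπ
  linear_combination hm

noncomputable def powerSeq (α : ℂ) (n : ℕ) : ℂ :=
  if n = 0 then 0 else exp (α * Real.log n)

noncomputable def powerCombination (α : ℂ) (d : ℕ) (q : ℕ → ℂ[X]) (t : ℂ) : ℂ :=
  ∑ c ∈ range (d + 1), (q c).eval t * exp (α * log (1 + c * t))

section

variable {α : ℂ} {d : ℕ} {q : ℕ → ℂ[X]}

lemma powerCombination_reflect_inv_natCast_eq_zero {p : ℕ → ℂ[X]} {D : ℕ}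
    (hD : ∀ j ≤ d, (p j).natDegree ≤ D)
    (hrec : ∀ n : ℕ, ∑ j ∈ range (d + 1), (p j).eval (n : ℂ) * powerSeq α (n + (d - j)) = 0)
    {n : ℕ} (hn : n ≠ 0) :
    powerCombination α d (fun c => reflect D (p (d - c))) (n : ℂ)⁻¹ = 0 := by
  have hscale : (n : ℂ) ^ D * exp (α * Real.log n) ≠ 0 := by simp [hn]
  refine (mul_eq_zero.1 ?_).resolve_right hscale
  rw [powerCombination, sum_mul, ← hrec n, ← sum_range_reflect]
  refine sum_congr rfl fun c hc => ?_
  have hc : c ≤ d := Nat.lt_succ_iff.1 (mem_range.1 hc)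
  have hexp : exp (α * log (1 + (d - c : ℕ) * (n : ℂ)⁻¹)) * exp (α * Real.log n) =
      powerSeq α (n + (d - c)) := by
    have := log_one_add_mul_inv_add_log (x := n) (y := (d - c : ℕ)) (by positivity) (by positivity)
    simp only [ofReal_natCast] at this
    rw [powerSeq, if_neg (by omega), ← exp_add, ← mul_add, this, Nat.cast_add]
  rw [add_tsub_cancel_right, Nat.sub_sub_self hc, ← hexp,
    ← eval_inv_reflect_mul_pow (Nat.cast_ne_zero.2 hn) (hD c hc)]
  ring

lemma powerCombination_eq_zero_of_im_ne_zero
    (hzero : ∀ n : ℕ, n ≠ 0 → powerCombination α d q (n : ℂ)⁻¹ = 0) :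
    ∀ t : ℂ, t.im ≠ 0 → powerCombination α d q t = 0 := by
  set U := ⋂ c ∈ range (d + 1), (fun t : ℂ => 1 + c * t) ⁻¹' slitPlane
  have hU : ∀ {t}, t ∈ U ↔ ∀ c ≤ d, 1 + c * t ∈ slitPlane := by
    simp [U]
  have hUopen : IsOpen U :=
    isOpen_biInter_finset fun c _ => isOpen_slitPlane.preimage (by fun_prop)
  have h0 : (0 : ℂ) ∈ U := hU.2 fun c _ => by simp
  have hUconn : IsPreconnected U := by
    refine (StarConvex.isPathConnected (a := 0) (fun t ht a b ha hb hab => ?_) h0)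
      |>.isConnected.isPreconnected
    rw [hU] at ht ⊢
    intro c hc
    have : 1 + c * (a • 0 + b • t) = a • 1 + b • (1 + c * t) := by
      simp only [smul_zero, zero_add, real_smul]
      linear_combination -(by exact_mod_cast hab : (a : ℂ) + b = 1)
    rw [this]
    exact starConvex_one_slitPlane (ht c hc) ha hb hab
  have hanalytic : AnalyticOnNhd ℂ (powerCombination α d q) U := by
    refine DifferentiableOn.analyticOnNhd (fun t ht => ?_) hUopen
    refine (DifferentiableAt.fun_sum fun c hc => ?_).differentiableWithinAt
    have hslit := hU.1 ht c (Nat.lt_succ_iff.1 (mem_range.1 hc))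
    exact (q c).differentiableAt.mul
      (((((differentiableAt_id.const_mul _).const_add 1).clog hslit).const_mul α).cexp)
  have hfreq : ∃ᶠ z in 𝓝[≠] (0 : ℂ), powerCombination α d q z = 0 := by
    have hinv : Tendsto (fun n : ℕ => (n : ℂ)⁻¹) atTop (𝓝[≠] 0) :=
      tendsto_nhdsWithin_iff.2 ⟨tendsto_inv_atTop_nhds_zero_nat,
        eventually_ne_atTop 0 |>.mono fun n hn => by simpa using hn⟩
    exact hinv.frequently (eventually_ne_atTop 0 |>.mono hzero).frequently
  intro t ht
  have hmem : t ∈ U := hU.2 fun c _ => by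
    rcases eq_or_ne c 0 with rfl | hc
    · simp
    · exact mem_slitPlane_iff.2 (Or.inr (by simp [hc, ht]))
  exact hanalytic.eqOn_zero_of_preconnected_of_frequently_eq_zero hUconn h0 hfreq hmem

lemma powerCombination_limit_eq_zero {l : Filter ℂ} [l.NeBot] {s : ℂ} (hl : l ≤ 𝓝 s)
    (hF : ∀ᶠ t in l, powerCombination α d q t = 0) (hslit : ∀ c < d, 1 + c * s ∈ slitPlane)
    {L : ℂ} (hL : Tendsto (fun t => log (1 + d * t)) l (𝓝 L)) :
    ∑ c ∈ range d, (q c).eval s * exp (α * log (1 + c * s)) + (q d).eval s * exp (α * L) = 0 := by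
  have hlim : Tendsto (powerCombination α d q) l
      (𝓝 (∑ c ∈ range d, (q c).eval s * exp (α * log (1 + c * s)) +
        (q d).eval s * exp (α * L))) := by
    unfold powerCombination
    simp only [sum_range_succ]
    refine .add (tendsto_finsetSum _ fun c hc => ContinuousAt.tendsto ?_ |>.mono_left hl) ?_
    · exact (q c).continuousAt.mul ((((continuousAt_id.const_mul _).const_add 1).clog
        (hslit c (mem_range.1 hc))).const_mul α).cexp
    · exact ((q d).continuousAt.tendsto.mono_left hl).mul
        ((continuous_exp.tendsto _).comp (hL.const_mul α))
  exact tendsto_nhds_unique hlim (tendsto_const_nhds.congr' (hF.mono fun t ht => ht.symm))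

lemma eval_eq_zero_of_powerCombination_eq_zero (hα : ∀ m : ℤ, α ≠ m)
    (hF : ∀ t : ℂ, t.im ≠ 0 → powerCombination α d q t = 0) {s : ℝ} (hs : 1 + d * s < 0)
    (hpos : ∀ c < d, 0 < 1 + c * s) : (q d).eval (s : ℂ) = 0 := by
  have hd : (0 : ℝ) < d := Nat.cast_pos.2 (Nat.pos_of_ne_zero (by rintro rfl; norm_num at hs))
  set w : ℂ := 1 + d * s
  have hw_re : w.re < 0 := by simpa [w] using hs
  have hw_im : w.im = 0 := by simp [w]
  have hslit : ∀ c < d, 1 + c * (s : ℂ) ∈ slitPlane := fun c hc => by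
    exact_mod_cast ofReal_mem_slitPlane.2 (hpos c hc)
  have hF_above : ∀ᶠ t in 𝓝[{t : ℂ | 0 < t.im}] (s : ℂ), powerCombination α d q t = 0 :=
    eventually_nhdsWithin_of_forall fun t ht => hF t (ne_of_gt ht)
  have hF_below : ∀ᶠ t in 𝓝[{t : ℂ | t.im < 0}] (s : ℂ), powerCombination α d q t = 0 :=
    eventually_nhdsWithin_of_forall fun t ht => hF t (ne_of_lt ht)
  have hcont : Tendsto (fun t : ℂ => 1 + d * t) (𝓝 s) (𝓝 w) :=
    Continuous.tendsto (by fun_prop) _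
  have h_above : Tendsto (fun t : ℂ => 1 + d * t) (𝓝[{t | 0 < t.im}] s) (𝓝[{z | 0 ≤ z.im}] w) :=
    tendsto_nhdsWithin_iff.2 ⟨hcont.mono_left nhdsWithin_le_nhds,
      eventually_nhdsWithin_of_forall fun t (ht : 0 < t.im) => by
        simpa using (mul_pos hd ht).le⟩
  have h_below : Tendsto (fun t : ℂ => 1 + d * t) (𝓝[{t | t.im < 0}] s) (𝓝[{z | z.im < 0}] w) :=
    tendsto_nhdsWithin_iff.2 ⟨hcont.mono_left nhdsWithin_le_nhds,
      eventually_nhdsWithin_of_forall fun t (ht : t.im < 0) => by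
        simpa using mul_neg_of_pos_of_neg hd ht⟩
  have : (𝓝[{t : ℂ | 0 < t.im}] (s : ℂ)).NeBot := mem_closure_iff_nhdsWithin_neBot.1 (by simp)
  have : (𝓝[{t : ℂ | t.im < 0}] (s : ℂ)).NeBot := mem_closure_iff_nhdsWithin_neBot.1 (by simp)
  have hlim_above := powerCombination_limit_eq_zero nhdsWithin_le_nhds hF_above hslit
    ((tendsto_log_nhdsWithin_im_nonneg_of_re_neg_of_im_zero hw_re hw_im).comp h_above)
  have hlim_below := powerCombination_limit_eq_zero nhdsWithin_le_nhds hF_below hslit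
    ((tendsto_log_nhdsWithin_im_neg_of_re_neg_of_im_zero hw_re hw_im).comp h_below)
  have hjump : (q d).eval (s : ℂ) *
      (exp (α * (Real.log ‖w‖ + π * I)) - exp (α * (Real.log ‖w‖ - π * I))) = 0 := by
    linear_combination hlim_above - hlim_below
  exact (mul_eq_zero.1 hjump).resolve_right (sub_ne_zero.2 (exp_mul_add_pi_mul_I_ne hα _))

lemma eq_zero_of_powerCombination_eq_zero (hα : ∀ m : ℤ, α ≠ m)
    (hF : ∀ t : ℂ, t.im ≠ 0 → powerCombination α d q t = 0) : q d = 0 := by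
  rcases Nat.eq_zero_or_pos d with rfl | hd
  · refine eq_zero_of_infinite_isRoot _ (Set.infinite_of_injective_forall_mem
      (f := fun n : ℕ => (n + 1) * I) (fun m n h => by simpa using h) fun n => ?_)
    simpa [powerCombination] using hF ((n + 1) * I) (by simpa using n.cast_add_one_ne_zero)
  · have hd' : (1 : ℝ) ≤ d := by exact_mod_cast hd
    -- on this interval `1 + d s < 0 < 1 + (d - 1) s`
    refine eq_zero_of_infinite_isRoot _
      (((Set.Ioo_infinite (a := -2 / (2 * (d : ℝ) - 1)) (b := -1 / (d : ℝ)) ?_).image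
        ofReal_injective.injOn).mono ?_)
    · rw [div_lt_div_iff₀ (by linarith) (by linarith)]
      linarith
    rintro _ ⟨s, ⟨hs₁, hs₂⟩, rfl⟩
    rw [div_lt_iff₀ (by linarith)] at hs₁
    rw [lt_div_iff₀ (by linarith)] at hs₂
    refine eval_eq_zero_of_powerCombination_eq_zero hα hF (by linarith) fun c hc => ?_
    have hc' : (c : ℝ) ≤ d - 1 := by
      rw [le_sub_iff_add_le]; exact_mod_cast hc
    nlinarith

end

lemma holonomicSeq_powerSeq_intCast (m : ℤ) : HolonomicSeq (powerSeq m) := by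
  obtain ⟨a, b, rfl⟩ : ∃ a b : ℕ, m = a - b :=
    ⟨m.toNat, (-m).toNat, (Int.toNat_sub_toNat_neg m).symm⟩
  refine HolonomicSeq.of_first_order (P := X ^ (a + 1) * (X + 1) ^ b)
    (((monic_X_pow _).mul ((monic_X_add_C 1).pow b)).ne_zero) (X ^ (b + 1) * (X + 1) ^ a)
    fun n => ?_
  rcases eq_or_ne n 0 with rfl | hn
  · simp [powerSeq]
  have hx : (n : ℂ) ≠ 0 := Nat.cast_ne_zero.2 hn
  have hx1 : (n : ℂ) + 1 ≠ 0 := by exact_mod_cast n.succ_ne_zero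
  rw [powerSeq, powerSeq, if_neg hn, if_neg n.succ_ne_zero, exp_int_mul_log_natCast _ hn,
    exp_int_mul_log_natCast _ n.succ_ne_zero]
  simp only [eval_mul, eval_pow, eval_add, eval_X, eval_one, Nat.cast_succ, zpow_sub₀ hx,
    zpow_sub₀ hx1, zpow_natCast]
  field_simp
  ring

/-- For `α ∈ ℂ`, the sequence `n ↦ n^α = exp(α log n)` (with value `0` at `n = 0`)
is holonomic if and only if `α` is an integer. -/
theorem power_holonomic_iff (α : ℂ) :
    HolonomicSeq (fun n : ℕ => if n = 0 then 0 else Complex.exp (α * Real.log n)) ↔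
      ∃ m : ℤ, α = (m : ℂ) := by
  change HolonomicSeq (powerSeq α) ↔ _
  refine ⟨fun ⟨d, p, hp0, hrec⟩ => ?_, fun ⟨m, hm⟩ => hm ▸ holonomicSeq_powerSeq_intCast m⟩
  by_contra! hα
  set D := (range (d + 1)).sup fun j => (p j).natDegree
  have hD : ∀ j ≤ d, (p j).natDegree ≤ D := fun j hj =>
    le_sup (f := fun j => (p j).natDegree) (mem_range.2 (Nat.lt_succ_of_le hj))
  have hF := powerCombination_eq_zero_of_im_ne_zero fun _ hn =>
    powerCombination_reflect_inv_natCast_eq_zero hD hrec hn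
  have := eq_zero_of_powerCombination_eq_zero hα hF
  simp only [Nat.sub_self, reflect_eq_zero_iff] at this
  exact hp0 this
end

section
/- The sequence π(n), the number of primes ≤ n, is not holonomic. -/
open Finset

lemma pc_succ (n : ℕ) :
    Nat.primeCounting (n + 1) =
      Nat.primeCounting n + if Nat.Prime (n + 1) then 1 else 0 := by
  simp [Nat.primeCounting, Nat.primeCounting', Nat.count_succ]

lemma pc_gap (a : ℕ) : ∀ b : ℕ, a ≤ b → (∀ k, a < k → k ≤ b → ¬ Nat.Prime k) →
    Nat.primeCounting b = Nat.primeCounting a := by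
  intro b
  induction b with
  | zero => intro h _; rw [Nat.le_zero.mp h]
  | succ b ih =>
    intro hab h
    rcases Nat.eq_or_lt_of_le hab with he | hl
    · rw [he]
    · rw [pc_succ, if_neg (h (b + 1) (by omega) le_rfl), add_zero,
        ih (by omega) (fun k hk1 hk2 => h k hk1 (by omega))]

lemma poly_zero (p : Polynomial ℂ) (h : ∀ N : ℕ, ∃ n : ℕ, N ≤ n ∧ p.eval (n : ℂ) = 0) :
    p = 0 := by
  by_contra hp
  have hfin : {n : ℕ | p.eval (n : ℂ) = 0}.Finite := by
    have hsub : {n : ℕ | p.eval (n : ℂ) = 0} ⊆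
        ((Nat.cast : ℕ → ℂ) ⁻¹' (p.roots.toFinset : Set ℂ)) := by
      intro n hn
      simp only [Set.mem_preimage, Finset.coe_sort_coe, Multiset.mem_toFinset,
        Finset.mem_coe, Polynomial.mem_roots hp]
      exact hn
    exact Set.Finite.subset
      (Set.Finite.preimage (Nat.cast_injective.injOn) (p.roots.toFinset.finite_toSet)) hsub
  obtain ⟨B, hB⟩ := hfin.bddAbove
  obtain ⟨n, hn, hn0⟩ := h (B + 1)
  exact absurd (hB hn0) (by omega)

lemma factorial_add_not_prime {M k : ℕ} (h2 : 2 ≤ k) (hM : k ≤ M) :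
    ¬ Nat.Prime (M.factorial + k) := by
  intro hp
  have hdvd : k ∣ M.factorial + k :=
    Nat.dvd_add (Nat.dvd_factorial (by omega) hM) dvd_rfl
  have := hp.eq_one_or_self_of_dvd k hdvd
  have := M.factorial_pos
  omega

/-- The prime-counting sequence `π(n)` is not holonomic. -/
theorem primeCounting_not_holonomic :
    ¬ HolonomicSeq (fun n : ℕ => (Nat.primeCounting n : ℂ)) := by
  rintro ⟨d, p, hp0, hrec⟩
  set P : Polynomial ℂ := ∑ j ∈ Finset.range (d + 1), p j with hP
  -- Step A : P = 0
  have hPzero : P = 0 := by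
    apply poly_zero
    intro N
    set M := max N (d + 1) with hM
    have hMfac : M ≤ M.factorial := Nat.self_le_factorial M
    refine ⟨M.factorial + 1, by omega, ?_⟩
    set n := M.factorial + 1 with hn
    have hc : ∀ j ∈ Finset.range (d + 1),
        (p j).eval (n : ℂ) * ((Nat.primeCounting (n + (d - j)) : ℂ)) =
        (p j).eval (n : ℂ) * (Nat.primeCounting n : ℂ) := by
      intro j hj
      simp only [Finset.mem_range] at hj
      have : Nat.primeCounting (n + (d - j)) = Nat.primeCounting n := by
        apply pc_gap
        · omega
        · intro k hk1 hk2
          have hk : k = M.factorial + (k - M.factorial) := by omega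
          rw [hk]
          exact factorial_add_not_prime (by omega) (by omega)
      rw [this]
    have hrn := hrec n
    simp only [] at hrn
    rw [Finset.sum_congr rfl hc, ← Finset.sum_mul] at hrn
    have hPe : (∑ j ∈ Finset.range (d + 1), (p j).eval (n : ℂ)) = P.eval (n : ℂ) := by
      rw [hP, Polynomial.eval_finset_sum]
    rw [hPe] at hrn
    have hpi : (Nat.primeCounting n : ℂ) ≠ 0 := by
      rw [Nat.cast_ne_zero]
      have := Nat.primeCounting_eq_zero_iff (n := n)
      omega
    exact (mul_eq_zero.mp hrn).resolve_right hpi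
  -- Step B : p 0 = 0
  apply hp0
  apply poly_zero
  intro N
  set M := max N (d + 1) with hM
  have hMfac : M ≤ M.factorial := Nat.self_le_factorial M
  have hex : ∃ q : ℕ, M.factorial + 2 ≤ q ∧ q.Prime := by
    obtain ⟨q, hq1, hq2⟩ := Nat.exists_infinite_primes (M.factorial + 2)
    exact ⟨q, hq1, hq2⟩
  classical
  obtain ⟨hq2, hqp⟩ := Nat.find_spec hex
  set q := Nat.find hex with hqdef
  have hmin : ∀ r, M.factorial + 2 ≤ r → r < q → ¬ r.Prime := by
    intro r hr1 hr2 hrp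
    exact Nat.find_min hex hr2 ⟨hr1, hrp⟩
  have hqM : M.factorial + M + 1 ≤ q := by
    by_contra hcon
    push_neg at hcon
    have hk : q = M.factorial + (q - M.factorial) := by omega
    exact absurd hqp (by rw [hk]; exact factorial_add_not_prime (by omega) (by omega))
  have hcomp : ∀ k, q - d ≤ k → k ≤ q - 1 → ¬ k.Prime := by
    intro k hk1 hk2
    exact hmin k (by omega) (by omega)
  set n := q - d with hn
  refine ⟨n, by omega, ?_⟩
  -- evaluate recurrence at n = q - d
  set c : ℕ := Nat.primeCounting (q - 1) with hc
  have hrn := hrec n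
  simp only [] at hrn
  rw [Finset.sum_range_succ'] at hrn
  have hone : (Nat.primeCounting (n + (d - 0)) : ℂ) = (c : ℂ) + 1 := by
    have h1 : n + (d - 0) = q := by omega
    have h2 : q = (q - 1) + 1 := by omega
    rw [h1, h2, pc_succ, if_pos (by rw [← h2]; exact hqp)]
    push_cast
    ring
  have htail : ∀ j ∈ Finset.range d,
      (p (j + 1)).eval (n : ℂ) * ((Nat.primeCounting (n + (d - (j + 1))) : ℂ)) =
      (p (j + 1)).eval (n : ℂ) * (c : ℂ) := by
    intro j hj
    simp only [Finset.mem_range] at hj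
    have h1 : n + (d - (j + 1)) = q - (j + 1) := by omega
    have h2 : Nat.primeCounting (q - 1) = Nat.primeCounting (q - (j + 1)) := by
      apply pc_gap
      · omega
      · intro k hk1 hk2
        exact hcomp k (by omega) (by omega)
    rw [h1, ← h2]
  rw [Finset.sum_congr rfl htail, hone, ← Finset.sum_mul] at hrn
  -- tail sum is -(p 0).eval n
  have hPe : (∑ j ∈ Finset.range d, (p (j + 1)).eval (n : ℂ)) + (p 0).eval (n : ℂ) = 0 := by
    have h3 : (∑ j ∈ Finset.range (d + 1), (p j).eval (n : ℂ)) = 0 := by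
      rw [← Polynomial.eval_finset_sum, ← hP, hPzero, Polynomial.eval_zero]
    rw [Finset.sum_range_succ'] at h3
    exact h3
  linear_combination hrn - (c : ℂ) * hPe
end

section
/- The sequence of Bell numbers B_n is not holonomic. -/
/-!
Let `f = ∑ Bₙ Xⁿ / n!`, `D = d/dX` and `θ = X D`, which multiplies the `n`-th coefficient by `n`.
Read on coefficients, a recurrence `∑ⱼ pⱼ(n) B_{n+d-j} = 0` says exactly that
`∑ⱼ pⱼ(θ) D^{d-j} f = 0`. Since `D f = eˣ f`, each `θⁱ Dˢ f` is `Q(X, eˣ) f` for a polynomial `Q`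
whose term of highest `eˣ`-degree is `Xⁱ e^{(s+i)X}`. Among the terms of highest `eˣ`-degree in the
equation the `X`-degrees are distinct, so a nonzero leading term survives, contradicting the
transcendence of `eˣ` over `K[X]`.
-/

open Finset

/-- The Bell numbers, counting set partitions, via the standard recurrence
`B_0 = 1`, `B_{n+1} = ∑_{k=0}^n C(n,k) B_k`. -/
def bell : ℕ → ℕ
  | 0 => 1
  | n + 1 => ∑ k ∈ (Finset.range (n + 1)).attach, n.choose k.1 * bell k.1
  decreasing_by exact Finset.mem_range.mp k.2

open PowerSeries Polynomial

theorem Polynomial.smul_powerSeries_eq_coe_mul {R : Type*} [CommSemiring R] (P : R[X])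
    (g : R⟦X⟧) : P • g = (P : R⟦X⟧) * g :=
  Algebra.smul_def P g

theorem Polynomial.eq_zero_of_derivative_add_smul_eq_zero {R : Type*} [CommRing R] [IsDomain R]
    {c : R} (hc : c ≠ 0) {P : R[X]} (h : derivative P + c • P = 0) : P = 0 := by
  by_contra hP
  have htop := congrArg (coeff · P.natDegree) h
  simp only [coeff_add, coeff_derivative, coeff_smul, smul_eq_mul, coeff_zero,
    coeff_eq_zero_of_natDegree_lt (Nat.lt_succ_self _), zero_mul, zero_add] at htop
  exact mul_ne_zero hc (leadingCoeff_ne_zero.mpr hP) htop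

theorem Polynomial.eq_zero_of_iterate_derivative_add_smul_eq_zero {R : Type*} [CommRing R]
    [IsDomain R] {c : R} (hc : c ≠ 0) (N : ℕ) {P : R[X]}
    (h : (fun Q => derivative Q + c • Q)^[N] P = 0) : P = 0 := by
  induction N generalizing P with
  | zero => exact h
  | succ N ih => exact eq_zero_of_derivative_add_smul_eq_zero hc (ih h)

theorem Polynomial.sum_smul_X_pow_ne_zero {ι R : Type*} [Semiring R] {s : Finset ι} {c : ι → R}
    {e : ι → ℕ} (he : Set.InjOn e s) {i : ι} (hi : i ∈ s) (hc : c i ≠ 0) :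
    ∑ j ∈ s, c j • (Polynomial.X : R[X]) ^ e j ≠ 0 := by
  intro h
  have hcoeff := congrArg (Polynomial.coeff · (e i)) h
  rw [Polynomial.finsetSum_coeff, sum_eq_single_of_mem i hi fun j hj hji => by
    simp [Polynomial.coeff_X_pow, he.ne hi hj hji.symm]] at hcoeff
  simp_all

noncomputable def PowerSeries.derivativeSubSmul {R : Type*} [CommRing R] (c : R) :
    Module.End R R⟦X⟧ :=
  (d⁄dX R : R⟦X⟧ →ₗ[R] R⟦X⟧) - c • LinearMap.id

theorem PowerSeries.derivativeSubSmul_apply {R : Type*} [CommRing R] (c : R) (g : R⟦X⟧) :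
    derivativeSubSmul c g = d⁄dX R g - c • g := rfl

noncomputable def PowerSeries.eulerOp (R : Type*) [CommSemiring R] : Module.End R R⟦X⟧ :=
  LinearMap.mulLeft R X ∘ₗ (d⁄dX R : R⟦X⟧ →ₗ[R] R⟦X⟧)

theorem PowerSeries.eulerOp_apply {R : Type*} [CommSemiring R] (g : R⟦X⟧) :
    eulerOp R g = X * d⁄dX R g := rfl

theorem PowerSeries.coeff_iterate_eulerOp {R : Type*} [CommSemiring R] (i n : ℕ) (g : R⟦X⟧) :
    coeff n ((eulerOp R)^[i] g) = (n : R) ^ i * coeff n g := by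
  induction i generalizing g with
  | zero => simp
  | succ i ih =>
    rw [Function.iterate_succ_apply, ih, eulerOp_apply, pow_succ, mul_assoc]
    rcases n with _ | n
    · simp
    · rw [coeff_succ_X_mul, coeff_derivative, Nat.cast_succ, mul_comm (coeff (n + 1) g)]

theorem PowerSeries.coeff_aeval_eulerOp {R : Type*} [CommSemiring R] (p : R[X]) (n : ℕ)
    (g : R⟦X⟧) : coeff n (Polynomial.aeval (eulerOp R) p g) = p.eval (n : R) * coeff n g := by
  induction p using Polynomial.induction_on' with
  | add p q hp hq => simp only [map_add, LinearMap.add_apply, hp, hq, eval_add, add_mul]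
  | monomial k c =>
    rw [aeval_monomial, Module.End.mul_apply, Module.algebraMap_end_apply, Module.End.pow_apply,
      map_smul, coeff_iterate_eulerOp, eval_monomial, smul_eq_mul, mul_assoc]

theorem bell_succ (n : ℕ) : bell (n + 1) = ∑ k ∈ Finset.range (n + 1), n.choose k * bell k := by
  rw [bell]
  exact Finset.sum_attach (Finset.range (n + 1)) fun k => n.choose k * bell k

section

variable {K : Type*} [Field K] [CharZero K]

theorem PowerSeries.derivative_exp_pow (l : ℕ) : d⁄dX K (exp K ^ l) = (l : K) • exp K ^ l := by
  rcases l with _ | l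
  · simp
  · rw [derivative_pow, derivative_exp, mul_assoc, ← pow_succ, Nat.add_sub_cancel,
      ← map_natCast (C (R := K)), ← smul_eq_C_mul]

theorem PowerSeries.derivative_smul_exp_pow (P : K[X]) (l : ℕ) :
    d⁄dX K (P • exp K ^ l) = (Polynomial.derivative P + (l : K) • P) • exp K ^ l := by
  simp only [smul_powerSeries_eq_coe_mul, Derivation.leibniz, derivative_exp_pow, derivative_coe,
    smul_eq_mul, Polynomial.coe_add, Polynomial.coe_smul, PowerSeries.smul_eq_C_mul]
  ring

variable (K) in
noncomputable def expSpan : ℕ → Submodule K[X] K⟦X⟧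
  | 0 => ⊥
  | m + 1 => expSpan m ⊔ K[X] ∙ exp K ^ m

theorem expSpan_mono : Monotone (expSpan K) :=
  monotone_nat_of_le_succ fun _ => le_sup_left

theorem smul_exp_pow_mem_expSpan {k m : ℕ} (hkm : k < m) (P : K[X]) :
    P • exp K ^ k ∈ expSpan K m :=
  expSpan_mono hkm (le_sup_right (a := expSpan K k) (Submodule.smul_mem _ P
    (Submodule.mem_span_singleton_self _)))

theorem derivative_mem_expSpan {m : ℕ} {u : K⟦X⟧} (hu : u ∈ expSpan K m) :
    d⁄dX K u ∈ expSpan K m := by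
  induction m generalizing u with
  | zero => simp_all [expSpan]
  | succ m ih =>
    obtain ⟨v, hv, w, hw, rfl⟩ := Submodule.mem_sup.mp hu
    obtain ⟨P, rfl⟩ := Submodule.mem_span_singleton.mp hw
    rw [map_add, derivative_smul_exp_pow]
    exact add_mem (expSpan_mono m.le_succ (ih hv)) (smul_exp_pow_mem_expSpan m.lt_succ_self _)

theorem exp_mul_mem_expSpan {m : ℕ} {u : K⟦X⟧} (hu : u ∈ expSpan K m) :
    exp K * u ∈ expSpan K (m + 1) := by
  induction m generalizing u with
  | zero => simp_all [expSpan]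
  | succ m ih =>
    obtain ⟨v, hv, w, hw, rfl⟩ := Submodule.mem_sup.mp hu
    obtain ⟨P, rfl⟩ := Submodule.mem_span_singleton.mp hw
    rw [mul_add, mul_smul_comm, ← pow_succ']
    exact add_mem (expSpan_mono (m + 1).le_succ (ih hv))
      (smul_exp_pow_mem_expSpan (m + 1).lt_succ_self _)

theorem iterate_derivativeSubSmul_smul_exp_pow (c : K) (N l : ℕ) (P : K[X]) :
    (derivativeSubSmul c)^[N] (P • exp K ^ l) =
      ((fun Q => derivative Q + ((l : K) - c) • Q)^[N] P) • exp K ^ l := by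
  have hconj : Function.Semiconj (fun Q : K[X] => Q • exp K ^ l)
      (fun Q => derivative Q + ((l : K) - c) • Q) (derivativeSubSmul c) := fun Q => by
    simp only [derivativeSubSmul_apply, derivative_smul_exp_pow, smul_assoc, sub_smul, add_smul]
    abel
  exact (hconj.iterate_right N P).symm

theorem iterate_derivativeSubSmul_mem_expSpan (c : K) (N : ℕ) {m : ℕ} {u : K⟦X⟧}
    (hu : u ∈ expSpan K m) : (derivativeSubSmul c)^[N] u ∈ expSpan K m := by
  induction N generalizing u with
  | zero => exact hu
  | succ N ih =>
    exact ih (sub_mem (derivative_mem_expSpan hu) (Submodule.smul_of_tower_mem _ c hu))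

/- `(D - m)^N` with `N > deg R` kills the component `R e^{mX}`, and acts on `A e^{lX}` through the
injective operator `(D + (l - m))^N` on `A`. -/
theorem eq_zero_of_smul_exp_pow_mem_expSpan {m l : ℕ} (hml : m ≤ l) {A : K[X]}
    (h : A • exp K ^ l ∈ expSpan K m) : A = 0 := by
  induction m generalizing A with
  | zero =>
    have : (A : K⟦X⟧) * exp K ^ l = 0 := by
      simpa [expSpan, smul_powerSeries_eq_coe_mul] using h
    exact coe_eq_zero_iff.mp ((mul_eq_zero.mp this).resolve_right
      (pow_ne_zero _ (isUnit_exp K).ne_zero))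
  | succ m ih =>
    obtain ⟨v, hv, w, hw, hvw⟩ := Submodule.mem_sup.mp h
    obtain ⟨R, rfl⟩ := Submodule.mem_span_singleton.mp hw
    set S := derivativeSubSmul (m : K)
    have hkill : S^[R.natDegree + 1] (R • exp K ^ m) = 0 := by
      simp only [S, iterate_derivativeSubSmul_smul_exp_pow, sub_self, zero_smul, add_zero]
      rw [iterate_derivative_eq_zero R.natDegree.lt_succ_self, zero_smul]
    have hlow := iterate_derivativeSubSmul_mem_expSpan (m : K) (R.natDegree + 1) hv
    rw [← add_zero (S^[_] v), ← hkill, ← iterate_map_add, hvw,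
      iterate_derivativeSubSmul_smul_exp_pow] at hlow
    refine eq_zero_of_iterate_derivative_add_smul_eq_zero ?_ _ (ih (by omega) hlow)
    rw [sub_ne_zero, Ne, Nat.cast_inj]
    omega

variable (K) in
noncomputable def bellSeries : K⟦X⟧ := mk fun n => (bell n : K) / n.factorial

theorem coeff_iterate_derivative_bellSeries (s n : ℕ) :
    coeff n ((d⁄dX K)^[s] (bellSeries K)) = (bell (n + s) : K) / n.factorial := by
  rw [PowerSeries.coeff_iterate_derivative, bellSeries, coeff_mk, ← Nat.factorial_mul_ascFactorial]
  have : ((n + 1).ascFactorial s : K) ≠ 0 := by exact_mod_cast (n.ascFactorial_pos s).ne'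
  have := n.factorial_ne_zero
  push_cast
  field_simp

theorem bellSeries_ne_zero : bellSeries K ≠ 0 := by
  intro h
  simpa [bellSeries, bell] using congrArg (PowerSeries.coeff 0) h

theorem derivative_bellSeries : d⁄dX K (bellSeries K) = exp K * bellSeries K := by
  ext n
  rw [← Function.iterate_one (d⁄dX K), coeff_iterate_derivative_bellSeries, PowerSeries.coeff_mul,
    ← Finset.Nat.sum_antidiagonal_swap]
  simp only [Prod.fst_swap, Prod.snd_swap]
  rw [Finset.Nat.sum_antidiagonal_eq_sum_range_succ
      (fun i j => coeff j (exp K) * coeff i (bellSeries K)),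
    bell_succ, Nat.cast_sum, Finset.sum_div]
  refine Finset.sum_congr rfl fun k hk => ?_
  have hkn : k ≤ n := Finset.mem_range_succ_iff.mp hk
  rw [coeff_exp, bellSeries, coeff_mk, Nat.cast_mul, Nat.cast_choose K hkn]
  have := n.factorial_ne_zero
  have := k.factorial_ne_zero
  have := (n - k).factorial_ne_zero
  simp only [map_div₀, map_one, map_natCast]
  field_simp

/- `g - A • (exp K ^ m * bellSeries K) ∈ bellSpan K m` says that `g = Q(X, eˣ) f` where `Q` has
`eˣ`-degree `m` and leading coefficient `A`. -/
variable (K) in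
noncomputable def bellSpan (m : ℕ) : Submodule K[X] K⟦X⟧ :=
  (expSpan K m).map (LinearMap.mulRight K[X] (bellSeries K))

theorem bellSpan_mono : Monotone (bellSpan K) :=
  fun _ _ h => Submodule.map_mono (expSpan_mono h)

theorem smul_exp_pow_mul_bellSeries_mem_bellSpan {k m : ℕ} (hkm : k < m) (A : K[X]) :
    A • (exp K ^ k * bellSeries K) ∈ bellSpan K m :=
  Submodule.mem_map.mpr ⟨A • exp K ^ k, smul_exp_pow_mem_expSpan hkm A, smul_mul_assoc _ _ _⟩

theorem mem_bellSpan_of_sub_smul_mem {m M : ℕ} (hmM : m < M) {g : K⟦X⟧} {A : K[X]}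
    (h : g - A • (exp K ^ m * bellSeries K) ∈ bellSpan K m) : g ∈ bellSpan K M := by
  simpa using add_mem (bellSpan_mono hmM.le h) (smul_exp_pow_mul_bellSeries_mem_bellSpan hmM A)

theorem eq_zero_of_smul_exp_pow_mul_bellSeries_mem_bellSpan {m : ℕ} {A : K[X]}
    (h : A • (exp K ^ m * bellSeries K) ∈ bellSpan K m) : A = 0 := by
  obtain ⟨u, hu, hmul⟩ := Submodule.mem_map.mp h
  rw [LinearMap.mulRight_apply, ← smul_mul_assoc] at hmul
  rw [mul_right_cancel₀ bellSeries_ne_zero hmul] at hu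
  exact eq_zero_of_smul_exp_pow_mem_expSpan le_rfl hu

theorem derivative_sub_smul_mem_bellSpan {m : ℕ} {g : K⟦X⟧} {A : K[X]}
    (h : g - A • (exp K ^ m * bellSeries K) ∈ bellSpan K m) :
    d⁄dX K g - A • (exp K ^ (m + 1) * bellSeries K) ∈ bellSpan K (m + 1) := by
  obtain ⟨u, hu, hug⟩ := Submodule.mem_map.mp h
  rw [LinearMap.mulRight_apply, eq_sub_iff_add_eq, ← smul_mul_assoc, ← add_mul] at hug
  have hw : u + A • exp K ^ m ∈ expSpan K (m + 1) :=
    add_mem (expSpan_mono m.le_succ hu) (smul_exp_pow_mem_expSpan m.lt_succ_self A)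
  refine Submodule.mem_map.mpr ⟨d⁄dX K (u + A • exp K ^ m) + exp K * u,
    add_mem (derivative_mem_expSpan hw) (exp_mul_mem_expSpan hu), ?_⟩
  rw [← hug, LinearMap.mulRight_apply, Derivation.leibniz, derivative_bellSeries]
  simp only [smul_powerSeries_eq_coe_mul, smul_eq_mul]
  ring

theorem iterate_derivative_bellSeries_sub_mem_bellSpan (s : ℕ) :
    (d⁄dX K)^[s] (bellSeries K) - (1 : K[X]) • (exp K ^ s * bellSeries K) ∈ bellSpan K s := by
  induction s with
  | zero => simp
  | succ s ih =>
    rw [Function.iterate_succ_apply']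
    exact derivative_sub_smul_mem_bellSpan ih

theorem eulerOp_sub_smul_mem_bellSpan {m : ℕ} {g : K⟦X⟧} {A : K[X]}
    (h : g - A • (exp K ^ m * bellSeries K) ∈ bellSpan K m) :
    eulerOp K g - (Polynomial.X * A) • (exp K ^ (m + 1) * bellSeries K) ∈ bellSpan K (m + 1) := by
  have := Submodule.smul_mem _ Polynomial.X (derivative_sub_smul_mem_bellSpan h)
  rwa [smul_sub, smul_smul, smul_powerSeries_eq_coe_mul Polynomial.X, Polynomial.coe_X,
    ← eulerOp_apply] at this

theorem pow_eulerOp_sub_smul_mem_bellSpan (i : ℕ) {m : ℕ} {g : K⟦X⟧} {A : K[X]}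
    (h : g - A • (exp K ^ m * bellSeries K) ∈ bellSpan K m) :
    (eulerOp K ^ i) g - (Polynomial.X ^ i * A) • (exp K ^ (m + i) * bellSeries K) ∈
      bellSpan K (m + i) := by
  induction i with
  | zero => simpa using h
  | succ i ih =>
    rw [pow_succ', Module.End.mul_apply, pow_succ', mul_assoc, ← add_assoc]
    exact eulerOp_sub_smul_mem_bellSpan ih

theorem aeval_eulerOp_sub_smul_mem_bellSpan (p : K[X]) {m : ℕ} {g : K⟦X⟧} {A : K[X]}
    (h : g - A • (exp K ^ m * bellSeries K) ∈ bellSpan K m) :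
    Polynomial.aeval (eulerOp K) p g - (p.leadingCoeff • Polynomial.X ^ p.natDegree * A) •
      (exp K ^ (m + p.natDegree) * bellSeries K) ∈ bellSpan K (m + p.natDegree) := by
  have hlow : ∀ i ∈ range p.natDegree,
      p.coeff i • (eulerOp K ^ i) g ∈ bellSpan K (m + p.natDegree) :=
    fun i hi => Submodule.smul_of_tower_mem _ _ (mem_bellSpan_of_sub_smul_mem
      (Nat.add_lt_add_left (mem_range.mp hi) m) (pow_eulerOp_sub_smul_mem_bellSpan i h))
  have htop := Submodule.smul_of_tower_mem _ p.leadingCoeff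
    (pow_eulerOp_sub_smul_mem_bellSpan p.natDegree h)
  convert add_mem (sum_mem hlow) htop using 1
  rw [aeval_eq_sum_range, sum_range_succ, LinearMap.add_apply, LinearMap.sum_apply,
    LinearMap.smul_apply, smul_sub, smul_mul_assoc, smul_assoc, coeff_natDegree]
  simp only [LinearMap.smul_apply]
  abel

theorem sum_sub_smul_mem_bellSpan {ι : Type*} {s : Finset ι} {g : ι → K⟦X⟧}
    {A : ι → K[X]} {m : ι → ℕ} {M : ℕ} (hm : ∀ i ∈ s, m i ≤ M)
    (h : ∀ i ∈ s, g i - A i • (exp K ^ m i * bellSeries K) ∈ bellSpan K (m i)) :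
    ∑ i ∈ s, g i - (∑ i ∈ s with m i = M, A i) • (exp K ^ M * bellSeries K) ∈ bellSpan K M := by
  have htop : ∀ i ∈ s.filter (m · = M), g i - A i • (exp K ^ M * bellSeries K) ∈ bellSpan K M := by
    intro i hi
    obtain ⟨his, rfl⟩ := mem_filter.mp hi
    exact h i his
  have hlow : ∀ i ∈ s.filter (m · ≠ M), g i ∈ bellSpan K M := by
    intro i hi
    obtain ⟨his, hiM⟩ := mem_filter.mp hi
    exact mem_bellSpan_of_sub_smul_mem (lt_of_le_of_ne (hm i his) hiM) (h i his)
  have := add_mem (sum_mem htop) (sum_mem hlow)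
  rwa [sum_sub_distrib, ← sum_smul, sub_add_eq_add_sub, sum_filter_add_sum_filter_not] at this

theorem sum_aeval_eulerOp_iterate_derivative_bellSeries_ne_zero {d j₀ : ℕ} {p : ℕ → K[X]}
    (hj₀ : j₀ ≤ d) (hp : p j₀ ≠ 0) :
    ∑ j ∈ range (d + 1), Polynomial.aeval (eulerOp K) (p j) ((d⁄dX K)^[d - j] (bellSeries K))
      ≠ 0 := by
  classical
  intro hzero
  rw [← sum_filter_of_ne (p := (p · ≠ 0)) fun j _ hj hpj => hj (by simp [hpj])] at hzero
  set level := fun j => d - j + (p j).natDegree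
  set support := (range (d + 1)).filter (p · ≠ 0)
  obtain ⟨j₁, hj₁, hmax⟩ := support.exists_max_image level ⟨j₀, by simp [support, hj₀, hp]⟩
  have hlead := sum_sub_smul_mem_bellSpan (s := support) (M := level j₁) hmax fun j _ => by
    simpa only [mul_one] using aeval_eulerOp_sub_smul_mem_bellSpan (p j)
      (iterate_derivative_bellSeries_sub_mem_bellSpan (d - j))
  rw [hzero, zero_sub, neg_mem_iff] at hlead
  -- the terms of top level have distinct `X`-degrees, since their levels `d - j + deg p_j` agree
  have hj₁top : j₁ ∈ support.filter (level · = level j₁) := mem_filter.mpr ⟨hj₁, rfl⟩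
  refine sum_smul_X_pow_ne_zero ?_ hj₁top (leadingCoeff_ne_zero.mpr (mem_filter.mp hj₁).2)
    (eq_zero_of_smul_exp_pow_mul_bellSeries_mem_bellSpan hlead)
  intro j hj j' hj' hjj'
  obtain ⟨hjs, hjM⟩ := mem_filter.mp (mem_coe.mp hj)
  obtain ⟨hj's, hj'M⟩ := mem_filter.mp (mem_coe.mp hj')
  have hjd := mem_range.mp (mem_filter.mp hjs).1
  have hj'd := mem_range.mp (mem_filter.mp hj's).1
  simp only [level] at hjM hj'M hjj'
  omega

end

/-- The sequence of Bell numbers is not holonomic. -/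
theorem bell_not_holonomic :
    ¬ HolonomicSeq (fun n : ℕ => (bell n : ℂ)) := by
  rintro ⟨d, p, hp0, hrec⟩
  refine sum_aeval_eulerOp_iterate_derivative_bellSeries_ne_zero (Nat.zero_le d) hp0 ?_
  ext n
  simp only [map_sum, coeff_aeval_eulerOp, coeff_iterate_derivative_bellSeries, map_zero,
    ← mul_div_assoc, ← sum_div]
  rw [hrec n, zero_div]
end
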